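/- arXiv:math/0411254 — 4 statements merged into one kernel-verified Lean document; each statement's English description precedes it below -/
import Mathlib

section
/- Let g be a 6-dimensional nilpotent real Lie algebra and let J be a nilpotent complex structure on g. Then there exist a basis ω¹, ω², ω³ of the space of (1,0)-forms of (g,J), complex numbers A, B, C, D, and ε, ρ ∈ {0,1}, such that dω¹ = 0, dω² = ε·(ω¹∧conj(ω¹)), and dω³ = ρ·(ω¹∧ω²) + (1−ε)·A·(ω¹∧conj(ω¹)) + B·(ω¹∧conj(ω²)) + C·(ω²∧conj(ω¹)) + (1−ε)·D·(ω²∧conj(ω²)). -/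
noncomputable section

open Complex

/-- An integrable complex structure on a real Lie algebra: an ℝ-linear map with
`J ∘ J = -id` satisfying the Nijenhuis integrability condition. -/
def IsComplexStructure {g : Type*} [LieRing g] [LieAlgebra ℝ g] (J : g →ₗ[ℝ] g) : Prop :=
  (∀ x, J (J x) = -x) ∧
  (∀ x y : g, ⁅J x, J y⁆ = J ⁅J x, y⁆ + J ⁅x, J y⁆ + ⁅x, y⁆)

/-- A (1,0)-form of `(g, J)`. -/
def IsOneZero {g : Type*} [LieRing g] [LieAlgebra ℝ g] (J : g →ₗ[ℝ] g)
    (ω : g →ₗ[ℝ] ℂ) : Prop :=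
  ∀ x, ω (J x) = Complex.I * ω x

/-- `ω 0, ω 1, ω 2` is a basis of the space of (1,0)-forms of `(g, J)`. -/
def IsOneZeroBasis {g : Type*} [LieRing g] [LieAlgebra ℝ g] (J : g →ₗ[ℝ] g)
    (ω : Fin 3 → (g →ₗ[ℝ] ℂ)) : Prop :=
  (∀ k, IsOneZero J (ω k)) ∧ LinearIndependent ℂ ω ∧
  ∀ η : g →ₗ[ℝ] ℂ, IsOneZero J η → η ∈ Submodule.span ℂ (Set.range ω)

/-- Wedge product of two ℂ-valued 1-forms, evaluated at a pair of vectors. -/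
def wC {g : Type*} (α β : g → ℂ) (x y : g) : ℂ := α x * β y - α y * β x

/-- Wedge product of two ℝ-valued 1-forms, evaluated at a pair of vectors. -/
def wR {g : Type*} (α β : g → ℝ) (x y : g) : ℝ := α x * β y - α y * β x

/-- Pointwise complex conjugate of a ℂ-valued 1-form. -/
def cg {g : Type*} (α : g → ℂ) : g → ℂ := fun x => (starRingEnd ℂ) (α x)

/-- The ascending series of `g` adapted to `J`. -/
def ascSeries {g : Type*} [LieRing g] [LieAlgebra ℝ g] (J : g →ₗ[ℝ] g) : ℕ → Set g
  | 0 => {0}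
  | (l + 1) => {x | (∀ y, ⁅x, y⁆ ∈ ascSeries J l) ∧ (∀ y, ⁅J x, y⁆ ∈ ascSeries J l)}

/-- `J` is a nilpotent complex structure. -/
def IsNilpotentJ {g : Type*} [LieRing g] [LieAlgebra ℝ g] (J : g →ₗ[ℝ] g) : Prop :=
  ∃ l, ascSeries J l = Set.univ

/-- The descending (lower) central series of `g` as ℝ-submodules. -/
def lcs (g : Type*) [LieRing g] [LieAlgebra ℝ g] : ℕ → Submodule ℝ g
  | 0 => ⊤
  | (k + 1) => Submodule.span ℝ {z | ∃ x ∈ lcs g k, ∃ y : g, z = ⁅x, y⁆}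

/-- `g` is a nilpotent Lie algebra. -/
def IsNilpotentLA (g : Type*) [LieRing g] [LieAlgebra ℝ g] : Prop :=
  ∃ k, lcs g k = ⊥

/-- The center of `g`, as an ℝ-submodule. -/
def centerS (g : Type*) [LieRing g] [LieAlgebra ℝ g] : Submodule ℝ g where
  carrier := {x : g | ∀ y : g, ⁅x, y⁆ = 0}
  add_mem' := fun ha hb => fun y => by rw [add_lie, ha y, hb y, add_zero]
  zero_mem' := fun y => zero_lie y
  smul_mem' := fun c x hx => fun y => by rw [smul_lie, hx y, smul_zero]

/-- A Hermitian structure: an inner product compatible with `J`. -/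
def IsHermitian {g : Type*} [LieRing g] [LieAlgebra ℝ g] (J : g →ₗ[ℝ] g)
    (m : g →ₗ[ℝ] g →ₗ[ℝ] ℝ) : Prop :=
  (∀ x y, m x y = m y x) ∧ (∀ x, x ≠ 0 → 0 < m x x) ∧ (∀ x y, m (J x) (J y) = m x y)

/-- The fundamental 2-form `Ω(x,y) = ⟨Jx, y⟩`. -/
def fund {g : Type*} [LieRing g] [LieAlgebra ℝ g] (J : g →ₗ[ℝ] g)
    (m : g →ₗ[ℝ] g →ₗ[ℝ] ℝ) (x y : g) : ℝ := m (J x) y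

/-- Chevalley–Eilenberg differential of a 2-form. -/
def d2 {g : Type*} [LieRing g] [LieAlgebra ℝ g] (Ω : g → g → ℝ) (x y z : g) : ℝ :=
  -Ω ⁅x, y⁆ z + Ω ⁅x, z⁆ y - Ω ⁅y, z⁆ x

/-- Action of `J` on a 3-form: `(Jα)(x,y,z) = -α(Jx,Jy,Jz)`. -/
def J3 {g : Type*} [LieRing g] [LieAlgebra ℝ g] (J : g →ₗ[ℝ] g)
    (α : g → g → g → ℝ) (x y z : g) : ℝ := -α (J x) (J y) (J z)

/-- Chevalley–Eilenberg differential of a 3-form. -/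
def d3 {g : Type*} [LieRing g] [LieAlgebra ℝ g] (α : g → g → g → ℝ) (x y z w : g) : ℝ :=
  -α ⁅x, y⁆ z w + α ⁅x, z⁆ y w - α ⁅x, w⁆ y z
    - α ⁅y, z⁆ x w + α ⁅y, w⁆ x z - α ⁅z, w⁆ x y

/-- SKT (strong Kähler with torsion): `dΩ ≠ 0` and `d(J dΩ) = 0`. -/
def IsSKT {g : Type*} [LieRing g] [LieAlgebra ℝ g] (J : g →ₗ[ℝ] g)
    (m : g →ₗ[ℝ] g →ₗ[ℝ] ℝ) : Prop :=
  (∃ x y z, d2 (fund J m) x y z ≠ 0) ∧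
  (∀ x y z w, d3 (J3 J (d2 (fund J m))) x y z w = 0)

/-- The 4-form `Ω ∧ Ω`. -/
def sq4 {g : Type*} (Ω : g → g → ℝ) (x1 x2 x3 x4 : g) : ℝ :=
  2 * (Ω x1 x2 * Ω x3 x4 - Ω x1 x3 * Ω x2 x4 + Ω x1 x4 * Ω x2 x3)

/-- Chevalley–Eilenberg differential of a 4-form. -/
def d4 {g : Type*} [LieRing g] [LieAlgebra ℝ g] (α : g → g → g → g → ℝ)
    (x0 x1 x2 x3 x4 : g) : ℝ :=
  -α ⁅x0, x1⁆ x2 x3 x4 + α ⁅x0, x2⁆ x1 x3 x4 - α ⁅x0, x3⁆ x1 x2 x4 + α ⁅x0, x4⁆ x1 x2 x3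
    - α ⁅x1, x2⁆ x0 x3 x4 + α ⁅x1, x3⁆ x0 x2 x4 - α ⁅x1, x4⁆ x0 x2 x3
    - α ⁅x2, x3⁆ x0 x1 x4 + α ⁅x2, x4⁆ x0 x1 x3 - α ⁅x3, x4⁆ x0 x1 x2

/-- Balanced Hermitian structure in dimension 6: `d(Ω ∧ Ω) = 0`. -/
def IsBalanced {g : Type*} [LieRing g] [LieAlgebra ℝ g] (J : g →ₗ[ℝ] g)
    (m : g →ₗ[ℝ] g →ₗ[ℝ] ℝ) : Prop :=
  ∀ x0 x1 x2 x3 x4, d4 (sq4 (fund J m)) x0 x1 x2 x3 x4 = 0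

/-- Locally conformal Kähler: `dΩ = θ ∧ Ω` for a closed 1-form `θ`. -/
def IsLCK {g : Type*} [LieRing g] [LieAlgebra ℝ g] (J : g →ₗ[ℝ] g)
    (m : g →ₗ[ℝ] g →ₗ[ℝ] ℝ) : Prop :=
  ∃ θ : g →ₗ[ℝ] ℝ, (∀ x y : g, θ ⁅x, y⁆ = 0) ∧
    ∀ x y z, d2 (fund J m) x y z =
      θ x * fund J m y z - θ y * fund J m x z + θ z * fund J m x y

/-- `g` has structure equations `(0,0,0,0,0,0)` (abelian). -/
def IsH1 (g : Type*) [LieRing g] [LieAlgebra ℝ g] : Prop :=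
  ∃ α : Module.Basis (Fin 6) ℝ (Module.Dual ℝ g),
    ∀ i, ∀ x y : g, α i ⁅x, y⁆ = 0

/-- `g` has structure equations `(0,0,0,0,12,34)`. -/
def IsH2 (g : Type*) [LieRing g] [LieAlgebra ℝ g] : Prop :=
  ∃ α : Module.Basis (Fin 6) ℝ (Module.Dual ℝ g),
    (∀ i : Fin 6, i.val < 4 → ∀ x y : g, α i ⁅x, y⁆ = 0) ∧
    (∀ x y : g, -(α 4 ⁅x, y⁆) = wR (α 0) (α 1) x y) ∧
    (∀ x y : g, -(α 5 ⁅x, y⁆) = wR (α 2) (α 3) x y)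

/-- `g` has structure equations `(0,0,0,0,0,12+34)`. -/
def IsH3 (g : Type*) [LieRing g] [LieAlgebra ℝ g] : Prop :=
  ∃ α : Module.Basis (Fin 6) ℝ (Module.Dual ℝ g),
    (∀ i : Fin 6, i.val < 5 → ∀ x y : g, α i ⁅x, y⁆ = 0) ∧
    (∀ x y : g, -(α 5 ⁅x, y⁆) = wR (α 0) (α 1) x y + wR (α 2) (α 3) x y)

/-- `g` has structure equations `(0,0,0,0,12,14+23)`. -/
def IsH4 (g : Type*) [LieRing g] [LieAlgebra ℝ g] : Prop :=
  ∃ α : Module.Basis (Fin 6) ℝ (Module.Dual ℝ g),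
    (∀ i : Fin 6, i.val < 4 → ∀ x y : g, α i ⁅x, y⁆ = 0) ∧
    (∀ x y : g, -(α 4 ⁅x, y⁆) = wR (α 0) (α 1) x y) ∧
    (∀ x y : g, -(α 5 ⁅x, y⁆) = wR (α 0) (α 3) x y + wR (α 1) (α 2) x y)

/-- `g` has structure equations `(0,0,0,0,13+42,14+23)`. -/
def IsH5 (g : Type*) [LieRing g] [LieAlgebra ℝ g] : Prop :=
  ∃ α : Module.Basis (Fin 6) ℝ (Module.Dual ℝ g),
    (∀ i : Fin 6, i.val < 4 → ∀ x y : g, α i ⁅x, y⁆ = 0) ∧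
    (∀ x y : g, -(α 4 ⁅x, y⁆) = wR (α 0) (α 2) x y + wR (α 3) (α 1) x y) ∧
    (∀ x y : g, -(α 5 ⁅x, y⁆) = wR (α 0) (α 3) x y + wR (α 1) (α 2) x y)

/-- `g` has structure equations `(0,0,0,0,12,13)`. -/
def IsH6 (g : Type*) [LieRing g] [LieAlgebra ℝ g] : Prop :=
  ∃ α : Module.Basis (Fin 6) ℝ (Module.Dual ℝ g),
    (∀ i : Fin 6, i.val < 4 → ∀ x y : g, α i ⁅x, y⁆ = 0) ∧
    (∀ x y : g, -(α 4 ⁅x, y⁆) = wR (α 0) (α 1) x y) ∧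
    (∀ x y : g, -(α 5 ⁅x, y⁆) = wR (α 0) (α 2) x y)

/-- `g` has structure equations `(0,0,0,0,0,12)`. -/
def IsH8 (g : Type*) [LieRing g] [LieAlgebra ℝ g] : Prop :=
  ∃ α : Module.Basis (Fin 6) ℝ (Module.Dual ℝ g),
    (∀ i : Fin 6, i.val < 5 → ∀ x y : g, α i ⁅x, y⁆ = 0) ∧
    (∀ x y : g, -(α 5 ⁅x, y⁆) = wR (α 0) (α 1) x y)

/-- `g` has structure equations `(0,0,0,12,23,14-35)`. -/
def IsH19neg (g : Type*) [LieRing g] [LieAlgebra ℝ g] : Prop :=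
  ∃ α : Module.Basis (Fin 6) ℝ (Module.Dual ℝ g),
    (∀ i : Fin 6, i.val < 3 → ∀ x y : g, α i ⁅x, y⁆ = 0) ∧
    (∀ x y : g, -(α 3 ⁅x, y⁆) = wR (α 0) (α 1) x y) ∧
    (∀ x y : g, -(α 4 ⁅x, y⁆) = wR (α 1) (α 2) x y) ∧
    (∀ x y : g, -(α 5 ⁅x, y⁆) = wR (α 0) (α 3) x y - wR (α 2) (α 4) x y)

/-- `g` has structure equations `(0,0,12,13,23,14+25)`. -/
def IsH26pos (g : Type*) [LieRing g] [LieAlgebra ℝ g] : Prop :=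
  ∃ α : Module.Basis (Fin 6) ℝ (Module.Dual ℝ g),
    (∀ i : Fin 6, i.val < 2 → ∀ x y : g, α i ⁅x, y⁆ = 0) ∧
    (∀ x y : g, -(α 2 ⁅x, y⁆) = wR (α 0) (α 1) x y) ∧
    (∀ x y : g, -(α 3 ⁅x, y⁆) = wR (α 0) (α 2) x y) ∧
    (∀ x y : g, -(α 4 ⁅x, y⁆) = wR (α 1) (α 2) x y) ∧
    (∀ x y : g, -(α 5 ⁅x, y⁆) = wR (α 0) (α 3) x y + wR (α 1) (α 4) x y)



/-! ### Auxiliary material -/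

section AuxJ
variable {g : Type*} [LieRing g] [LieAlgebra ℝ g] [Module ℂ g] [IsScalarTower ℝ ℂ g]

lemma csmul_decomp (z : ℂ) (x : g) : z • x = z.re • x + z.im • ((I:ℂ) • x) := by
  have hco : ∀ (r : ℝ) (x : g), (r : ℂ) • x = r • x := fun r x => by
    rw [← Complex.coe_algebraMap]; exact algebraMap_smul ℂ r x
  conv_lhs => rw [← Complex.re_add_im z]
  rw [add_smul, mul_smul, hco, hco]

lemma lie_csmul (z : ℂ) (x y : g) :
    ⁅z • x, y⁆ = z.re • ⁅x, y⁆ + z.im • ⁅(I:ℂ) • x, y⁆ := by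
  rw [csmul_decomp z x, add_lie, smul_lie, smul_lie]

lemma conj_decomp (z : ℂ) : (starRingEnd ℂ) z = (z.re:ℂ) - z.im * I := by
  apply Complex.ext <;> simp

/-- Master expansion lemma for (1,0)-forms on brackets of complex multiples. -/
lemma masterM
    (hint : ∀ x y : g, ⁅(I:ℂ) • x, (I:ℂ) • y⁆ =
      (I:ℂ) • ⁅(I:ℂ) • x, y⁆ + (I:ℂ) • ⁅x, (I:ℂ) • y⁆ + ⁅x, y⁆)
    (ω : g →ₗ[ℝ] ℂ) (hω : ∀ x : g, ω ((I:ℂ) • x) = I * ω x)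
    (u v : g) (z w : ℂ) :
    2 * ω ⁅z • u, w • v⁆ =
      ω ⁅u, v⁆ * ((starRingEnd ℂ) z * w + z * (starRingEnd ℂ) w)
      + ω ⁅u, (I:ℂ) • v⁆ * ((z*w - z*(starRingEnd ℂ) w) * (-I))
      + ω ⁅(I:ℂ) • u, v⁆ * ((z*w - (starRingEnd ℂ) z * w) * (-I)) := by
  have hv : ∀ (u' : g), ω ⁅u', w • v⁆ = w.re • ω ⁅u', v⁆ + w.im • ω ⁅u', (I:ℂ) • v⁆ := by
    intro u'
    rw [show ⁅u', w • v⁆ = -⁅w • v, u'⁆ by rw [lie_skew], lie_csmul, neg_add,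
      ← smul_neg, ← smul_neg, lie_skew, lie_skew, map_add, map_smul, map_smul]
  rw [lie_csmul, map_add, map_smul, map_smul, hv, hv]
  have hK : ω ⁅(I:ℂ) • u, (I:ℂ) • v⁆ =
      I * ω ⁅(I:ℂ) • u, v⁆ + I * ω ⁅u, (I:ℂ) • v⁆ + ω ⁅u, v⁆ := by
    rw [hint, map_add, map_add, hω, hω]
  set a := z.re with ha
  set b := z.im with hb
  set c := w.re with hc
  set d := w.im with hd
  have hz : z = (a:ℂ) + b*I := (Complex.re_add_im z).symm
  have hw : w = (c:ℂ) + d*I := (Complex.re_add_im w).symm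
  rw [hK, conj_decomp z, conj_decomp w, ← ha, ← hb, ← hc, ← hd, hz, hw]
  simp only [Complex.real_smul]
  linear_combination (2*((a:ℂ)*d*ω ⁅u, (I:ℂ)•v⁆ + (c:ℂ)*b*ω ⁅(I:ℂ)•u, v⁆ +
    (d:ℂ)*b*ω ⁅u,v⁆ + (d:ℂ)*b*I*ω ⁅u,(I:ℂ)•v⁆ +
    (d:ℂ)*b*I*ω ⁅(I:ℂ)•u,v⁆)) * Complex.I_sq

/-- The ascending series as ℂ-submodules. -/
def aSub (g : Type*) [LieRing g] [LieAlgebra ℝ g] [Module ℂ g] [IsScalarTower ℝ ℂ g] :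
    ℕ → Submodule ℂ g
  | 0 => ⊥
  | (l + 1) =>
    { carrier := {x | ∀ y, ⁅x, y⁆ ∈ aSub g l ∧ ⁅(I:ℂ) • x, y⁆ ∈ aSub g l}
      add_mem' := by
        intro x x' hx hx' y
        refine ⟨?_, ?_⟩
        · rw [add_lie]; exact Submodule.add_mem _ (hx y).1 (hx' y).1
        · rw [smul_add, add_lie]; exact Submodule.add_mem _ (hx y).2 (hx' y).2
      zero_mem' := by
        intro y
        constructor
        · rw [zero_lie]; exact Submodule.zero_mem _
        · rw [smul_zero, zero_lie]; exact Submodule.zero_mem _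
      smul_mem' := by
        intro z x hx y
        constructor
        · rw [lie_csmul]
          exact Submodule.add_mem _
            (Submodule.smul_of_tower_mem _ _ (hx y).1)
            (Submodule.smul_of_tower_mem _ _ (hx y).2)
        · rw [smul_smul, lie_csmul]
          exact Submodule.add_mem _
            (Submodule.smul_of_tower_mem _ _ (hx y).1)
            (Submodule.smul_of_tower_mem _ _ (hx y).2) }

lemma mem_aSub_succ (x : g) (l : ℕ) :
    x ∈ aSub g (l+1) ↔ ∀ y, ⁅x, y⁆ ∈ aSub g l ∧ ⁅(I:ℂ) • x, y⁆ ∈ aSub g l := Iff.rfl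

lemma aSub_mono : ∀ l, aSub g l ≤ aSub g (l+1) := by
  intro l
  induction l with
  | zero => exact bot_le
  | succ l ih =>
    intro x hx
    rw [mem_aSub_succ] at hx ⊢
    exact fun y => ⟨ih (hx y).1, ih (hx y).2⟩

lemma aSub_stab (l : ℕ) (h : aSub g (l+1) = aSub g l) :
    ∀ m, l ≤ m → aSub g m = aSub g l := by
  intro m
  induction m with
  | zero => intro hm; rw [Nat.le_zero.mp hm]
  | succ m ih =>
    intro hm
    rcases Nat.lt_or_ge l (m+1) with hlt | hge
    · have hlm : l ≤ m := by omega
      have h2 : aSub g (m+1) = aSub g (l+1) := by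
        apply Submodule.ext
        intro x
        rw [mem_aSub_succ, mem_aSub_succ, ih hlm]
      rw [h2, h]
    · have hl : l = m + 1 := by omega
      rw [hl]

set_option linter.unusedSectionVars false in
lemma range_pair (x y : g) : Set.range ![x, y] = {x, y} := by
  simp [Matrix.range_cons, Matrix.range_empty, Set.pair_comm]

lemma aSub_le {l m : ℕ} (h : l ≤ m) : aSub g l ≤ aSub g m :=
  monotone_nat_of_le_succ aSub_mono h

lemma aSub_succ_ne (htop : ∃ l, aSub g l = ⊤) (l : ℕ) (hne : aSub g (l+1) ≠ ⊤) :
    aSub g l ≠ aSub g (l+1) := by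
  intro he
  obtain ⟨m, hm⟩ := htop
  have hstab := aSub_stab l he.symm
  have hl : aSub g l = ⊤ := by
    rcases le_or_gt l m with h1 | h1
    · rw [← hstab m h1]; exact hm
    · exact top_le_iff.mp (hm ▸ aSub_le h1.le)
  exact hne (le_antisymm le_top (hl ▸ aSub_le l.le_succ))

lemma aSub3_top (hfin : Module.finrank ℂ g = 3) (htop : ∃ l, aSub g l = ⊤) :
    aSub g 3 = ⊤ := by
  haveI : FiniteDimensional ℂ g := FiniteDimensional.of_finrank_pos (by omega)
  by_contra hne
  have h2ne : aSub g 2 ≠ ⊤ := fun h => hne (top_le_iff.mp (h ▸ aSub_le (by norm_num)))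
  have h1ne : aSub g 1 ≠ ⊤ := fun h => h2ne (top_le_iff.mp (h ▸ aSub_le (by norm_num)))
  have l01 : aSub g 0 < aSub g 1 := lt_of_le_of_ne (aSub_mono 0) (aSub_succ_ne htop 0 h1ne)
  have l12 : aSub g 1 < aSub g 2 := lt_of_le_of_ne (aSub_mono 1) (aSub_succ_ne htop 1 h2ne)
  have l23 : aSub g 2 < aSub g 3 := lt_of_le_of_ne (aSub_mono 2) (aSub_succ_ne htop 2 hne)
  have f01 := Submodule.finrank_lt_finrank_of_lt l01
  have f12 := Submodule.finrank_lt_finrank_of_lt l12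
  have f23 := Submodule.finrank_lt_finrank_of_lt l23
  have f0 : Module.finrank ℂ (aSub g 0) = 0 := by
    show Module.finrank ℂ (⊥ : Submodule ℂ g) = 0
    simp
  have fle : Module.finrank ℂ (aSub g 3) ≤ 3 := hfin ▸ Submodule.finrank_le _
  have : Module.finrank ℂ (aSub g 3) = 3 := by omega
  exact hne (Submodule.eq_top_of_finrank_eq (by rw [this, hfin]))

lemma aSub1_ne_bot (hfin : Module.finrank ℂ g = 3) (htop : ∃ l, aSub g l = ⊤) :
    aSub g 1 ≠ ⊥ := by
  intro h
  have h0 : aSub g 0 = aSub g 1 := by rw [h]; rfl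
  obtain ⟨m, hm⟩ := htop
  have hstab := aSub_stab 0 h0.symm
  have h1 : (⊤ : Submodule ℂ g) = ⊥ := by
    rcases Nat.eq_zero_or_pos m with h1 | h1
    · rw [← hm, h1]; rfl
    · rw [← hm, hstab m (Nat.zero_le m)]; rfl
  have : Module.finrank ℂ g = 0 := by
    rw [← finrank_top ℂ g, h1, finrank_bot]
  omega

/-- Choice of the adapted pair `(u2, u3)`. -/
lemma exists_adapted_pair (hfin : Module.finrank ℂ g = 3) (htop : ∃ l, aSub g l = ⊤) :
    ∃ u2 u3 : g, LinearIndependent ℂ ![u2, u3] ∧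
      (∀ x ∈ Submodule.span ℂ ({u3} : Set g), ∀ y : g, ⁅x, y⁆ = 0) ∧
      (∀ x ∈ Submodule.span ℂ ({u2, u3} : Set g), ∀ y : g,
        ⁅x, y⁆ ∈ Submodule.span ℂ ({u3} : Set g)) ∧
      (∀ x y : g, ⁅x, y⁆ ∈ Submodule.span ℂ ({u2, u3} : Set g)) := by
  haveI : FiniteDimensional ℂ g := FiniteDimensional.of_finrank_pos (by omega)
  have h3top := aSub3_top hfin htop
  have hA1z : ∀ x ∈ aSub g 1, ∀ y : g, ⁅x, y⁆ = 0 := by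
    intro x hx y
    have := ((mem_aSub_succ x 0).mp hx y).1
    exact (Submodule.mem_bot ℂ).mp this
  have hA2br : ∀ x y : g, ⁅x, y⁆ ∈ aSub g 2 := by
    intro x y
    have hx : x ∈ aSub g 3 := h3top ▸ Submodule.mem_top
    exact ((mem_aSub_succ x 2).mp hx y).1
  obtain ⟨u3, hu3A, hu3ne⟩ := Submodule.exists_mem_ne_zero_of_ne_bot (aSub1_ne_bot hfin htop)
  have hspan3 : Submodule.span ℂ ({u3} : Set g) ≤ aSub g 1 := by
    rw [Submodule.span_le]; simpa using hu3A
  have hfs3 : Module.finrank ℂ (Submodule.span ℂ ({u3} : Set g)) = 1 :=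
    finrank_span_singleton hu3ne
  have hC3 : ∀ x ∈ Submodule.span ℂ ({u3} : Set g), ∀ y : g, ⁅x, y⁆ = 0 :=
    fun x hx y => hA1z x (hspan3 hx) y
  have hpick : ∀ (V W : Submodule ℂ g), Module.finrank ℂ V < Module.finrank ℂ W →
      ∃ u ∈ W, u ∉ V := by
    intro V W h
    by_contra hc
    push_neg at hc
    exact absurd (Submodule.finrank_mono (fun x hx => hc x hx)) (by omega)
  have hpair : ∀ u2' : g, u2' ∉ Submodule.span ℂ ({u3} : Set g) →
      LinearIndependent ℂ ![u2', u3] := by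
    intro u2' hu2'
    have h1 : LinearIndependent ℂ ![u3] := LinearIndependent.of_subsingleton (i := 0) hu3ne
    have : u2' ∉ Submodule.span ℂ (Set.range ![u3]) := by
      simpa [Matrix.range_cons, Matrix.range_empty] using hu2'
    exact (linearIndependent_fin_cons.mpr ⟨h1, this⟩ :
      LinearIndependent ℂ (Fin.cons u2' ![u3]))
  have hfrpair : ∀ u2' : g, LinearIndependent ℂ ![u2', u3] →
      Module.finrank ℂ (Submodule.span ℂ ({u2', u3} : Set g)) = 2 := by
    intro u2' hind
    rw [← range_pair u2', finrank_span_eq_card hind]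
    simp
  have hf1ge : 1 ≤ Module.finrank ℂ (aSub g 1) := by
    have := Submodule.finrank_mono hspan3
    omega
  by_cases hA1top : aSub g 1 = ⊤
  · have habel : ∀ x y : g, ⁅x, y⁆ = 0 := fun x y =>
      hA1z x (hA1top ▸ Submodule.mem_top) y
    obtain ⟨u2, -, hu2⟩ := hpick (Submodule.span ℂ ({u3} : Set g)) ⊤
      (by rw [hfs3, finrank_top, hfin]; norm_num)
    exact ⟨u2, u3, hpair u2 hu2, hC3,
      fun x hx y => by rw [habel x y]; exact Submodule.zero_mem _,
      fun x y => by rw [habel x y]; exact Submodule.zero_mem _⟩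
  · have hf1le : Module.finrank ℂ (aSub g 1) ≤ 2 := by
      by_contra hc
      push_neg at hc
      have h3 := hfin ▸ Submodule.finrank_le (aSub g 1)
      exact hA1top (Submodule.eq_top_of_finrank_eq (by omega))
    by_cases hA2top : aSub g 2 = ⊤
    · have hbrA1 : ∀ x y : g, ⁅x, y⁆ ∈ aSub g 1 := fun x y =>
        ((mem_aSub_succ x 1).mp (hA2top ▸ Submodule.mem_top) y).1
      by_cases hf2 : 2 ≤ Module.finrank ℂ (aSub g 1)
      · obtain ⟨u2, hu2A, hu2⟩ := hpick (Submodule.span ℂ ({u3} : Set g)) (aSub g 1)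
          (by omega)
        have hind := hpair u2 hu2
        have hsle : Submodule.span ℂ ({u2, u3} : Set g) ≤ aSub g 1 := by
          rw [Submodule.span_le]
          rw [Set.insert_subset_iff]
          exact ⟨hu2A, by simpa using hu3A⟩
        have hseq : Submodule.span ℂ ({u2, u3} : Set g) = aSub g 1 :=
          Submodule.eq_of_le_of_finrank_eq hsle (by rw [hfrpair u2 hind]; omega)
        refine ⟨u2, u3, hind, hC3, ?_, ?_⟩
        · intro x hx y
          rw [hA1z x (hseq ▸ hx) y]
          exact Submodule.zero_mem _
        · intro x y
          rw [hseq]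
          exact hbrA1 x y
      · have hA1eq : Submodule.span ℂ ({u3} : Set g) = aSub g 1 :=
          Submodule.eq_of_le_of_finrank_eq hspan3 (by omega)
        obtain ⟨u2, -, hu2⟩ := hpick (Submodule.span ℂ ({u3} : Set g)) ⊤
          (by rw [hfs3, finrank_top, hfin]; norm_num)
        refine ⟨u2, u3, hpair u2 hu2, hC3, ?_, ?_⟩
        · intro x hx y
          rw [← hA1eq] at hbrA1
          exact hbrA1 x y
        · intro x y
          refine Submodule.span_mono (by simp)
            (?_ : ⁅x,y⁆ ∈ Submodule.span ℂ ({u3} : Set g))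
          rw [hA1eq]
          exact hbrA1 x y
    · have l12 : aSub g 1 < aSub g 2 :=
        lt_of_le_of_ne (aSub_mono 1) (aSub_succ_ne htop 1 hA2top)
      have f12 := Submodule.finrank_lt_finrank_of_lt l12
      have hf2le : Module.finrank ℂ (aSub g 2) ≤ 2 := by
        by_contra hc
        push_neg at hc
        have h3 := hfin ▸ Submodule.finrank_le (aSub g 2)
        exact hA2top (Submodule.eq_top_of_finrank_eq (by omega))
      have hA1eq : Submodule.span ℂ ({u3} : Set g) = aSub g 1 :=
        Submodule.eq_of_le_of_finrank_eq hspan3 (by omega)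
      obtain ⟨u2, hu2A, hu2⟩ := hpick (Submodule.span ℂ ({u3} : Set g)) (aSub g 2)
        (by omega)
      have hind := hpair u2 hu2
      have hsle : Submodule.span ℂ ({u2, u3} : Set g) ≤ aSub g 2 := by
        rw [Submodule.span_le, Set.insert_subset_iff]
        exact ⟨hu2A, by simpa using aSub_mono 1 hu3A⟩
      have hseq : Submodule.span ℂ ({u2, u3} : Set g) = aSub g 2 :=
        Submodule.eq_of_le_of_finrank_eq hsle (by rw [hfrpair u2 hind]; omega)
      refine ⟨u2, u3, hind, hC3, ?_, ?_⟩
      · intro x hx y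
        rw [hseq] at hx
        rw [hA1eq]
        exact ((mem_aSub_succ x 1).mp hx y).1
      · intro x y
        rw [hseq]
        exact hA2br x y

end AuxJ

section AuxRaw
variable {g : Type*} [LieRing g] [LieAlgebra ℝ g] [Module ℂ g] [IsScalarTower ℝ ℂ g]

set_option maxHeartbeats 1000000 in
lemma exists_raw (hfin : Module.finrank ℂ g = 3) (htop : ∃ l, aSub g l = ⊤)
    (hint : ∀ x y : g, ⁅(I:ℂ) • x, (I:ℂ) • y⁆ =
      (I:ℂ) • ⁅(I:ℂ) • x, y⁆ + (I:ℂ) • ⁅x, (I:ℂ) • y⁆ + ⁅x, y⁆) :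
    ∃ (ω : Fin 3 → (g →ₗ[ℝ] ℂ)) (u : Fin 3 → g) (e r A' B' C' D' : ℂ),
      (∀ k (x : g), ω k ((I:ℂ) • x) = I * ω k x) ∧
      (∀ (k : Fin 3) (z : ℂ) (x : g), ω k (z • x) = z * ω k x) ∧
      (∀ x : g, x = (ω 0 x) • (u 0) + (ω 1 x) • (u 1) + (ω 2 x) • (u 2)) ∧
      (∀ i j, ω i (u j) = if i = j then 1 else 0) ∧
      (∀ x y : g, ω 0 ⁅x, y⁆ = 0) ∧
      (∀ x y : g, -(ω 1 ⁅x, y⁆) = e * wC (ω 0) (cg (ω 0)) x y) ∧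
      (∀ x y : g, -(ω 2 ⁅x, y⁆) = r * wC (ω 0) (ω 1) x y + A' * wC (ω 0) (cg (ω 0)) x y
        + B' * wC (ω 0) (cg (ω 1)) x y + C' * wC (ω 1) (cg (ω 0)) x y
        + D' * wC (ω 1) (cg (ω 1)) x y) := by
  haveI : FiniteDimensional ℂ g := FiniteDimensional.of_finrank_pos (by omega)
  obtain ⟨u2, u3, hind2, C3, C2, C1⟩ := exists_adapted_pair hfin htop
  -- complete to a basis
  have hsub : ¬ ((⊤ : Submodule ℂ g) ≤ Submodule.span ℂ ({u2, u3} : Set g)) := by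
    intro hle
    have h1 : Module.finrank ℂ (Submodule.span ℂ ({u2, u3} : Set g)) = 2 := by
      rw [show ({u2, u3} : Set g) = Set.range ![u2, u3] by
        simp [Matrix.range_cons, Matrix.range_empty, Set.pair_comm]]
      rw [finrank_span_eq_card hind2]; simp
    have := Submodule.finrank_mono hle
    rw [h1] at this
    rw [finrank_top] at this
    omega
  obtain ⟨u1, -, hu1⟩ := SetLike.not_le_iff_exists.mp hsub
  have hind3 : LinearIndependent ℂ ![u1, u2, u3] := by
    refine (linearIndependent_fin_cons.mpr ⟨hind2, ?_⟩ :
      LinearIndependent ℂ (Fin.cons u1 ![u2, u3]))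
    simpa [Matrix.range_cons, Matrix.range_empty, Set.pair_comm] using hu1
  let b : Module.Basis (Fin 3) ℂ g := basisOfLinearIndependentOfCardEqFinrank hind3 (by simp [hfin])
  have hb : ∀ i, b i = ![u1, u2, u3] i := by
    intro i
    rw [coe_basisOfLinearIndependentOfCardEqFinrank]
  have hb0 : b 0 = u1 := hb 0
  have hb1 : b 1 = u2 := hb 1
  have hb2 : b 2 = u3 := hb 2
  have hcl : ∀ (k : Fin 3) (z : ℂ) (x : g), (b.coord k) (z • x) = z * (b.coord k) x := by
    intro k z x
    rw [map_smul, smul_eq_mul]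
  have hIl : ∀ (k : Fin 3) (x : g), (b.coord k) ((I:ℂ) • x) = I * (b.coord k) x :=
    fun k x => hcl k I x
  have hdual : ∀ i j : Fin 3, (b.coord i) (![u1, u2, u3] j) = if i = j then 1 else 0 := by
    intro i j
    rw [← hb j, Module.Basis.coord_apply, Module.Basis.repr_self, Finsupp.single_apply]
    simp [eq_comm]
  have hdec : ∀ x : g, x = (b.coord 0 x) • u1 + (b.coord 1 x) • u2 + (b.coord 2 x) • u3 := by
    intro x
    conv_lhs => rw [← b.sum_repr x]
    rw [Fin.sum_univ_three, ← Module.Basis.coord_apply, ← Module.Basis.coord_apply, ← Module.Basis.coord_apply,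
      hb0, hb1, hb2]
  have hk1 : ∀ v ∈ Submodule.span ℂ ({u3} : Set g), (b.coord 1) v = 0 := by
    intro v hv
    have hle : Submodule.span ℂ ({u3} : Set g) ≤ LinearMap.ker (b.coord 1) := by
      rw [Submodule.span_le, Set.singleton_subset_iff]
      have := hdual 1 2
      simpa using this
    exact LinearMap.mem_ker.mp (hle hv)
  have hk0 : ∀ v ∈ Submodule.span ℂ ({u2, u3} : Set g), (b.coord 0) v = 0 := by
    intro v hv
    have hle : Submodule.span ℂ ({u2, u3} : Set g) ≤ LinearMap.ker (b.coord 0) := by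
      rw [Submodule.span_le, Set.insert_subset_iff, Set.singleton_subset_iff]
      constructor
      · have := hdual 0 1; simpa using this
      · have := hdual 0 2; simpa using this
    exact LinearMap.mem_ker.mp (hle hv)
  -- bracket-vanishing helpers
  have hZ3 : ∀ (z : ℂ) (w : g), ⁅z • u3, w⁆ = (0:g) := by
    intro z w
    exact C3 _ (Submodule.smul_mem _ _ (Submodule.subset_span (by simp))) w
  have hZ3R : ∀ (z : ℂ) (w : g), ⁅w, z • u3⁆ = (0:g) := by
    intro z w
    rw [← lie_skew, hZ3, neg_zero]
  have hL2 : ∀ (z : ℂ) (w : g), (b.coord 1) ⁅z • u2, w⁆ = 0 := by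
    intro z w
    exact hk1 _ (C2 _ (Submodule.smul_mem _ _ (Submodule.subset_span (by simp))) w)
  have hR2 : ∀ (z : ℂ) (w : g), (b.coord 1) ⁅w, z • u2⁆ = 0 := by
    intro z w
    rw [← lie_skew, map_neg, hL2, neg_zero]
  refine ⟨fun k => (b.coord k).restrictScalars ℝ, ![u1, u2, u3],
    -(I/2) * (b.coord 1) ⁅u1, (I:ℂ) • u1⁆,
    I * ((b.coord 2) ⁅u1, (I:ℂ) • u2⁆ + (b.coord 2) ⁅(I:ℂ) • u1, u2⁆)/2,
    -(I/2) * (b.coord 2) ⁅u1, (I:ℂ) • u1⁆,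
    -((b.coord 2) ⁅u1, u2⁆ + I * (b.coord 2) ⁅u1, (I:ℂ) • u2⁆)/2,
    ((b.coord 2) ⁅u1, u2⁆ + I * (b.coord 2) ⁅(I:ℂ) • u1, u2⁆)/2,
    -(I/2) * (b.coord 2) ⁅u2, (I:ℂ) • u2⁆,
    ?_, ?_, ?_, ?_, ?_, ?_, ?_⟩
  · intro k x
    simpa using hIl k x
  · intro k z x
    simpa using hcl k z x
  · intro x
    have h := hdec x
    simp only [LinearMap.coe_restrictScalars]
    convert h using 2
    all_goals simp
  · intro i j
    simpa using hdual i j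
  · intro x y
    simp only [LinearMap.coe_restrictScalars]
    exact hk0 _ (C1 x y)
  · -- dω1 equation
    intro x y
    simp only [wC, cg, LinearMap.coe_restrictScalars]
    set c0 := (b.coord 0) x with hc0
    set d0 := (b.coord 0) y with hd0
    have hx' : x = c0 • u1 + ((b.coord 1 x) • u2 + (b.coord 2 x) • u3) := by
      rw [hc0, ← add_assoc]; exact hdec x
    have hy' : y = d0 • u1 + ((b.coord 1 y) • u2 + (b.coord 2 y) • u3) := by
      rw [hd0, ← add_assoc]; exact hdec y
    rw [show ⁅x, y⁆ = ⁅c0 • u1 + ((b.coord 1 x) • u2 + (b.coord 2 x) • u3),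
        d0 • u1 + ((b.coord 1 y) • u2 + (b.coord 2 y) • u3)⁆ by rw [← hx', ← hy']]
    simp only [add_lie, lie_add, map_add, hZ3, hZ3R, map_zero, hL2, hR2, add_zero, zero_add]
    have m := masterM hint ((b.coord 1).restrictScalars ℝ) (fun x => hIl 1 x) u1 u1 c0 d0
    simp only [LinearMap.coe_restrictScalars] at m
    have hsk : (b.coord 1) ⁅(I:ℂ) • u1, u1⁆ = -((b.coord 1) ⁅u1, (I:ℂ) • u1⁆) := by
      rw [← lie_skew, map_neg]
    rw [hsk, lie_self, map_zero] at m
    linear_combination (-(1:ℂ)/2) * m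
  · -- dω3 equation
    intro x y
    simp only [wC, cg, LinearMap.coe_restrictScalars]
    set c0 := (b.coord 0) x with hc0
    set c1 := (b.coord 1) x with hc1
    set d0 := (b.coord 0) y with hd0
    set d1 := (b.coord 1) y with hd1
    have hx' : x = c0 • u1 + c1 • u2 + (b.coord 2 x) • u3 := by
      rw [hc0, hc1]; exact hdec x
    have hy' : y = d0 • u1 + d1 • u2 + (b.coord 2 y) • u3 := by
      rw [hd0, hd1]; exact hdec y
    rw [show ⁅x, y⁆ = ⁅c0 • u1 + c1 • u2 + (b.coord 2 x) • u3,
        d0 • u1 + d1 • u2 + (b.coord 2 y) • u3⁆ by rw [← hx', ← hy']]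
    simp only [add_lie, lie_add, map_add, hZ3, hZ3R, map_zero, add_zero, zero_add]
    have hω2 : ∀ x : g, ((b.coord 2).restrictScalars ℝ) ((I:ℂ) • x) = I * ((b.coord 2).restrictScalars ℝ) x := by
      intro x; simpa using hIl 2 x
    have m11 := masterM hint ((b.coord 2).restrictScalars ℝ) hω2 u1 u1 c0 d0
    have m12 := masterM hint ((b.coord 2).restrictScalars ℝ) hω2 u1 u2 c0 d1
    have m21 := masterM hint ((b.coord 2).restrictScalars ℝ) hω2 u2 u1 c1 d0
    have m22 := masterM hint ((b.coord 2).restrictScalars ℝ) hω2 u2 u2 c1 d1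
    simp only [LinearMap.coe_restrictScalars] at m11 m12 m21 m22
    have sk1 : (b.coord 2) ⁅(I:ℂ) • u1, u1⁆ = -((b.coord 2) ⁅u1, (I:ℂ) • u1⁆) := by
      rw [← lie_skew, map_neg]
    have sk2 : (b.coord 2) ⁅(I:ℂ) • u2, u2⁆ = -((b.coord 2) ⁅u2, (I:ℂ) • u2⁆) := by
      rw [← lie_skew, map_neg]
    have s1 : (b.coord 2) ⁅u2, u1⁆ = -((b.coord 2) ⁅u1, u2⁆) := by
      rw [← lie_skew, map_neg]
    have s2 : (b.coord 2) ⁅u2, (I:ℂ) • u1⁆ = -((b.coord 2) ⁅(I:ℂ) • u1, u2⁆) := by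
      rw [← lie_skew, map_neg]
    have s3 : (b.coord 2) ⁅(I:ℂ) • u2, u1⁆ = -((b.coord 2) ⁅u1, (I:ℂ) • u2⁆) := by
      rw [← lie_skew, map_neg]
    rw [sk1, lie_self, map_zero] at m11
    rw [sk2, lie_self, map_zero] at m22
    rw [s1, s2, s3] at m21
    linear_combination (-(1:ℂ)/2) * (m11 + m12 + m21 + m22)


set_option linter.unusedSectionVars false in
lemma jacobiD (ω : Fin 3 → (g →ₗ[ℝ] ℂ)) (u : Fin 3 → g) (e r A' B' C' D' : ℂ)
    (hcl : ∀ (k : Fin 3) (z : ℂ) (x : g), ω k (z • x) = z * ω k x)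
    (hdual : ∀ i j, ω i (u j) = if i = j then 1 else 0)
    (h1 : ∀ x y : g, ω 0 ⁅x, y⁆ = 0)
    (h2 : ∀ x y : g, -(ω 1 ⁅x, y⁆) = e * wC (ω 0) (cg (ω 0)) x y)
    (h3 : ∀ x y : g, -(ω 2 ⁅x, y⁆) = r * wC (ω 0) (ω 1) x y + A' * wC (ω 0) (cg (ω 0)) x y
        + B' * wC (ω 0) (cg (ω 1)) x y + C' * wC (ω 1) (cg (ω 0)) x y
        + D' * wC (ω 1) (cg (ω 1)) x y)
    (he : e ≠ 0) : D' = 0 := by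
  have h2' : ∀ x y : g, ω 1 ⁅x, y⁆ = -(e * wC (ω 0) (cg (ω 0)) x y) := by
    intro x y; rw [← h2 x y]; ring
  have h3' : ∀ x y : g, ω 2 ⁅x, y⁆ = -(r * wC (ω 0) (ω 1) x y + A' * wC (ω 0) (cg (ω 0)) x y
      + B' * wC (ω 0) (cg (ω 1)) x y + C' * wC (ω 1) (cg (ω 0)) x y
      + D' * wC (ω 1) (cg (ω 1)) x y) := by
    intro x y; rw [← h3 x y]; ring
  have key : ∀ a b c : g, ω 2 ⁅⁅a,b⁆,c⁆ = ω 2 ⁅a,⁅b,c⁆⁆ - ω 2 ⁅b,⁅a,c⁆⁆ := by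
    intro a b c
    rw [lie_lie, map_sub]
  have E1 := key (u 0) ((I:ℂ) • u 0) (u 1)
  have E2 := key (u 0) ((I:ℂ) • u 0) ((I:ℂ) • u 1)
  simp only [h3'] at E1 E2
  simp only [wC, cg, h1, h2', hcl, hdual, map_zero, map_mul, map_sub, map_neg, map_one,
    Complex.conj_I] at E1 E2
  norm_num at E1 E2
  rcases E1 with hD | h
  · exact hD
  rcases E2 with hD | h'
  · exact hD
  exact absurd (by linear_combination (-I/4)*h + (1/4)*h' + e * Complex.I_sq : e = 0) he


/-- packaging: the dual forms are a (1,0)-basis -/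
lemma packageN1 (J : g →ₗ[ℝ] g) (hJi : ∀ x : g, J x = (I:ℂ) • x)
    (ω : Fin 3 → (g →ₗ[ℝ] ℂ)) (u : Fin 3 → g)
    (hIl : ∀ (k : Fin 3) (x : g), ω k ((I:ℂ) • x) = I * ω k x)
    (hdec : ∀ x : g, x = (ω 0 x) • (u 0) + (ω 1 x) • (u 1) + (ω 2 x) • (u 2))
    (hdual : ∀ i j, ω i (u j) = if i = j then 1 else 0) :
    IsOneZeroBasis J ω := by
  refine ⟨fun k x => by rw [hJi, hIl], ?_, ?_⟩
  · rw [Fintype.linearIndependent_iff]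
    intro c hc j
    have h := LinearMap.congr_fun hc (u j)
    simp only [LinearMap.sum_apply, LinearMap.smul_apply, smul_eq_mul, LinearMap.zero_apply,
      Fin.sum_univ_three] at h
    fin_cases j <;> simp [hdual] at h <;> exact h
  · intro η hη
    have hηc : ∀ (z : ℂ) (x : g), η (z • x) = z * η x := by
      intro z x
      rw [csmul_decomp z x, map_add, map_smul, map_smul, ← hJi, hη]
      rw [Complex.real_smul, Complex.real_smul]
      conv_rhs => rw [← Complex.re_add_im z]
      ring
    have hrepr : η = η (u 0) • ω 0 + η (u 1) • ω 1 + η (u 2) • ω 2 := by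
      ext x
      conv_lhs => rw [show x = (ω 0 x) • (u 0) + (ω 1 x) • (u 1) + (ω 2 x) • (u 2) from hdec x]
      simp only [map_add, hηc, LinearMap.add_apply, LinearMap.smul_apply, smul_eq_mul]
      ring
    rw [hrepr]
    refine Submodule.add_mem _ (Submodule.add_mem _ ?_ ?_) ?_ <;>
      exact Submodule.smul_mem _ _ (Submodule.subset_span (Set.mem_range_self _))


lemma ascSeries_eq_aSub (J : g →ₗ[ℝ] g) (hJi : ∀ x : g, J x = (I:ℂ) • x) :
    ∀ l, ascSeries J l = (aSub g l : Set g) := by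
  intro l
  induction l with
  | zero =>
    show ({0} : Set g) = _
    rw [show aSub g 0 = (⊥ : Submodule ℂ g) from rfl, Submodule.bot_coe]
  | succ l ih =>
    ext x
    show (∀ y, ⁅x, y⁆ ∈ ascSeries J l) ∧ (∀ y, ⁅J x, y⁆ ∈ ascSeries J l) ↔ _
    rw [SetLike.mem_coe, mem_aSub_succ]
    simp only [ih, hJi, SetLike.mem_coe]
    constructor
    · rintro ⟨p, q⟩ y
      exact ⟨p y, q y⟩
    · intro p
      exact ⟨fun y => (p y).1, fun y => (p y).2⟩

end AuxRaw

section AuxN2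
variable {g : Type*} [LieRing g] [LieAlgebra ℝ g]

/-- change of basis preserves being a (1,0)-basis -/
lemma packageN2 (J : g →ₗ[ℝ] g) (ω : Fin 3 → (g →ₗ[ℝ] ℂ)) (c d μ : ℂ)
    (hc : c ≠ 0) (hd : d ≠ 0) (h : IsOneZeroBasis J ω) :
    IsOneZeroBasis J ![ω 0, c • ω 1, d • ω 2 + μ • ω 1] := by
  obtain ⟨h10, hind, hspan⟩ := h
  set ν : Fin 3 → (g →ₗ[ℝ] ℂ) := ![ω 0, c • ω 1, d • ω 2 + μ • ω 1] with hν
  have hν0 : ν 0 = ω 0 := rfl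
  have hν1 : ν 1 = c • ω 1 := rfl
  have hν2 : ν 2 = d • ω 2 + μ • ω 1 := rfl
  have hw1 : ω 1 = c⁻¹ • ν 1 := by
    rw [hν1, smul_smul, inv_mul_cancel₀ hc, one_smul]
  have hw2 : ω 2 = d⁻¹ • ν 2 - (d⁻¹ * μ) • ω 1 := by
    rw [hν2, smul_add, smul_smul, inv_mul_cancel₀ hd, one_smul, smul_smul]
    abel
  refine ⟨?_, ?_, ?_⟩
  · intro k x
    fin_cases k
    · exact h10 0 x
    · show (c • ω 1) (J x) = I * (c • ω 1) x
      simp only [LinearMap.smul_apply, smul_eq_mul, h10 1 x]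
      ring
    · show (d • ω 2 + μ • ω 1) (J x) = I * (d • ω 2 + μ • ω 1) x
      simp only [LinearMap.add_apply, LinearMap.smul_apply, smul_eq_mul, h10 1 x, h10 2 x]
      ring
  · rw [Fintype.linearIndependent_iff]
    intro a ha j
    have hsum : a 0 • ω 0 + (c * a 1 + μ * a 2) • ω 1 + (d * a 2) • ω 2 = 0 := by
      rw [← ha, Fin.sum_univ_three, hν0, hν1, hν2]
      module
    have h0 := Fintype.linearIndependent_iff.mp hind
      ![a 0, c * a 1 + μ * a 2, d * a 2] (by rw [Fin.sum_univ_three]; exact hsum)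
    have e0 := h0 0
    have e1 := h0 1
    have e2 := h0 2
    simp only [Matrix.cons_val_zero, Matrix.cons_val_one, Matrix.head_cons,
      Matrix.cons_val_two, Matrix.tail_cons] at e0 e1 e2
    have ha2 : a 2 = 0 := by
      rcases mul_eq_zero.mp e2 with h | h
      · exact absurd h hd
      · exact h
    have ha1 : a 1 = 0 := by
      rw [ha2, mul_zero, add_zero] at e1
      rcases mul_eq_zero.mp e1 with h | h
      · exact absurd h hc
      · exact h
    fin_cases j
    · exact e0
    · exact ha1
    · exact ha2
  · intro η hη
    have := hspan η hη
    refine Submodule.span_le.mpr ?_ this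
    rintro f ⟨k, rfl⟩
    fin_cases k
    · exact Submodule.subset_span ⟨0, rfl⟩
    · show (ω 1 : g →ₗ[ℝ] ℂ) ∈ (Submodule.span ℂ (Set.range ν) : Set _)
      rw [show ω 1 = c⁻¹ • ν 1 from hw1]
      exact Submodule.smul_mem _ _ (Submodule.subset_span ⟨1, rfl⟩)
    · show (ω 2 : g →ₗ[ℝ] ℂ) ∈ (Submodule.span ℂ (Set.range ν) : Set _)
      rw [show ω 2 = d⁻¹ • ν 2 - (d⁻¹ * μ) • ω 1 from hw2, hw1, smul_smul]
      exact Submodule.sub_mem _ (Submodule.smul_mem _ _ (Submodule.subset_span ⟨2, rfl⟩))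
        (Submodule.smul_mem _ _ (Submodule.subset_span ⟨1, rfl⟩))


end AuxN2

set_option maxHeartbeats 1600000 in
/-- reduced equations for nilpotent complex structures on
6-dimensional nilpotent Lie algebras. -/
theorem reduced_equations_nilpotent
    (g : Type*) [LieRing g] [LieAlgebra ℝ g]
    (hdim : Module.finrank ℝ g = 6) (hnil : IsNilpotentLA g)
    (J : g →ₗ[ℝ] g) (hJ : IsComplexStructure J) (hJn : IsNilpotentJ J) :
    ∃ (ω : Fin 3 → (g →ₗ[ℝ] ℂ)) (A B C D : ℂ) (ε ρ : ℝ),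
      IsOneZeroBasis J ω ∧ (ε = 0 ∨ ε = 1) ∧ (ρ = 0 ∨ ρ = 1) ∧
      (∀ x y : g, ω 0 ⁅x, y⁆ = 0) ∧
      (∀ x y : g, -(ω 1 ⁅x, y⁆) = (ε : ℂ) * wC (ω 0) (cg (ω 0)) x y) ∧
      (∀ x y : g, -(ω 2 ⁅x, y⁆) =
        (ρ : ℂ) * wC (ω 0) (ω 1) x y + ((1 - ε : ℝ) : ℂ) * A * wC (ω 0) (cg (ω 0)) x y
          + B * wC (ω 0) (cg (ω 1)) x y + C * wC (ω 1) (cg (ω 0)) x y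
          + ((1 - ε : ℝ) : ℂ) * D * wC (ω 1) (cg (ω 1)) x y) := by
  obtain ⟨hJ2, hJint⟩ := hJ
  letI sm : SMul ℂ g := ⟨fun z x => z.re • x + z.im • J x⟩
  have hsm : ∀ (z : ℂ) (x : g), z • x = z.re • x + z.im • J x := fun _ _ => rfl
  letI md : Module ℂ g :=
    { smul := (· • ·)
      one_smul := fun x => by rw [hsm]; simp
      mul_smul := fun z w x => by
        rw [hsm, hsm, hsm, map_add, map_smul, map_smul, hJ2]
        simp only [Complex.mul_re, Complex.mul_im, sub_smul, add_smul, smul_smul, smul_neg]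
        module
      smul_zero := fun z => by rw [hsm]; simp
      smul_add := fun z x y => by
        rw [hsm, hsm, hsm, map_add, smul_add, smul_add]
        abel
      add_smul := fun z w x => by
        rw [hsm, hsm, hsm]
        simp only [Complex.add_re, Complex.add_im, add_smul]
        abel
      zero_smul := fun x => by rw [hsm]; simp }
  haveI tw : IsScalarTower ℝ ℂ g := ⟨by
    intro r z x
    rw [hsm, hsm, Complex.real_smul]
    simp only [Complex.mul_re, Complex.mul_im, Complex.ofReal_re, Complex.ofReal_im]
    simp only [smul_add, smul_smul]
    module⟩
  have hJi : ∀ x : g, J x = (I:ℂ) • x := by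
    intro x
    rw [hsm]
    simp
  have hint : ∀ x y : g, ⁅(I:ℂ) • x, (I:ℂ) • y⁆ =
      (I:ℂ) • ⁅(I:ℂ) • x, y⁆ + (I:ℂ) • ⁅x, (I:ℂ) • y⁆ + ⁅x, y⁆ := by
    intro x y
    simp only [← hJi]
    exact hJint x y
  have hfin3 : Module.finrank ℂ g = 3 := by
    have h := Module.finrank_mul_finrank ℝ ℂ g
    rw [Complex.finrank_real_complex, hdim] at h
    omega
  have htop : ∃ l, aSub g l = ⊤ := by
    obtain ⟨l, hl⟩ := hJn
    refine ⟨l, Submodule.eq_top_iff'.mpr fun x => ?_⟩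
    have hx : x ∈ ascSeries J l := by rw [hl]; trivial
    have := ascSeries_eq_aSub J hJi l
    rw [this] at hx
    exact hx
  obtain ⟨ω, u, e, r, A', B', C', D', hIl, hcl, hdec, hdual, h1, h2, h3⟩ :=
    exists_raw hfin3 htop hint
  have hbasis : IsOneZeroBasis J ω := packageN1 J hJi ω u hIl hdec hdual
  simp only [wC, cg] at h2 h3
  by_cases he : e = 0
  · by_cases hr : r = 0
    · refine ⟨![ω 0, (1:ℂ) • ω 1, (1:ℂ) • ω 2 + (0:ℂ) • ω 1], A', B', C', D', 0, 0,
        packageN2 J ω 1 1 0 one_ne_zero one_ne_zero hbasis, Or.inl rfl, Or.inl rfl,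
        ?_, ?_, ?_⟩
      · intro x y
        simpa using h1 x y
      · intro x y
        simp only [Matrix.cons_val_zero, Matrix.cons_val_one, Matrix.head_cons,
          wC, cg, LinearMap.smul_apply, smul_eq_mul, one_mul, Complex.ofReal_zero]
        rw [he] at h2
        linear_combination h2 x y
      · intro x y
        simp only [Matrix.cons_val_zero, Matrix.cons_val_one, Matrix.head_cons,
          Matrix.cons_val_two, Matrix.tail_cons, wC, cg, LinearMap.smul_apply,
          LinearMap.add_apply, smul_eq_mul, one_mul, zero_mul, mul_zero, add_zero,
          map_mul, map_one, Complex.ofReal_zero, Complex.ofReal_one, map_zero]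
        norm_num
        rw [hr] at h3
        linear_combination h3 x y
    · refine ⟨![ω 0, (1:ℂ) • ω 1, r⁻¹ • ω 2 + (0:ℂ) • ω 1],
        A' * r⁻¹, B' * r⁻¹, C' * r⁻¹, D' * r⁻¹, 0, 1,
        packageN2 J ω 1 r⁻¹ 0 one_ne_zero (inv_ne_zero hr) hbasis, Or.inl rfl, Or.inr rfl,
        ?_, ?_, ?_⟩
      · intro x y
        simpa using h1 x y
      · intro x y
        simp only [Matrix.cons_val_zero, Matrix.cons_val_one, Matrix.head_cons,
          wC, cg, LinearMap.smul_apply, smul_eq_mul, one_mul, Complex.ofReal_zero]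
        rw [he] at h2
        linear_combination h2 x y
      · intro x y
        simp only [Matrix.cons_val_zero, Matrix.cons_val_one, Matrix.head_cons,
          Matrix.cons_val_two, Matrix.tail_cons, wC, cg, LinearMap.smul_apply,
          LinearMap.add_apply, smul_eq_mul, one_mul, zero_mul, mul_zero, add_zero,
          map_mul, map_one, Complex.ofReal_zero, Complex.ofReal_one, map_zero]
        have hv2 : (ω 2) ⁅x, y⁆ = -(r * ((ω 0) x * (ω 1) y - (ω 0) y * (ω 1) x)
            + A' * ((ω 0) x * (starRingEnd ℂ) ((ω 0) y) - (ω 0) y * (starRingEnd ℂ) ((ω 0) x))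
            + B' * ((ω 0) x * (starRingEnd ℂ) ((ω 1) y) - (ω 0) y * (starRingEnd ℂ) ((ω 1) x))
            + C' * ((ω 1) x * (starRingEnd ℂ) ((ω 0) y) - (ω 1) y * (starRingEnd ℂ) ((ω 0) x))
            + D' * ((ω 1) x * (starRingEnd ℂ) ((ω 1) y) - (ω 1) y * (starRingEnd ℂ) ((ω 1) x))) := by
          linear_combination -(h3 x y)
        rw [hv2]
        push_cast
        field_simp
        try ring
  · have hD' : D' = 0 := by
      refine jacobiD ω u e r A' B' C' D' hcl hdual h1 ?_ ?_ he
      · intro x y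
        simp only [wC, cg]
        linear_combination h2 x y
      · intro x y
        simp only [wC, cg]
        linear_combination h3 x y
    have hce : (starRingEnd ℂ) e ≠ 0 := by
      intro h
      apply he
      have := congrArg (starRingEnd ℂ) h
      simpa using this
    rw [hD'] at h3
    by_cases hr : r = 0
    · refine ⟨![ω 0, e⁻¹ • ω 1, (1:ℂ) • ω 2 + (-A' * e⁻¹) • ω 1],
        0, B' * (starRingEnd ℂ) e, C' * e, 0, 1, 0,
        packageN2 J ω e⁻¹ 1 (-A' * e⁻¹) (inv_ne_zero he) one_ne_zero hbasis,
        Or.inr rfl, Or.inl rfl, ?_, ?_, ?_⟩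
      · intro x y
        simpa using h1 x y
      · intro x y
        simp only [Matrix.cons_val_zero, Matrix.cons_val_one, Matrix.head_cons,
          wC, cg, LinearMap.smul_apply, smul_eq_mul, Complex.ofReal_one]
        have hv1 : (ω 1) ⁅x, y⁆ = -(e * ((ω 0) x * (starRingEnd ℂ) ((ω 0) y)
            - (ω 0) y * (starRingEnd ℂ) ((ω 0) x))) := by
          linear_combination -(h2 x y)
        rw [hv1]
        push_cast
        field_simp
        try ring
      · intro x y
        simp only [Matrix.cons_val_zero, Matrix.cons_val_one, Matrix.head_cons,
          Matrix.cons_val_two, Matrix.tail_cons, wC, cg, LinearMap.smul_apply,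
          LinearMap.add_apply, smul_eq_mul, map_mul, map_inv₀, map_neg, map_one,
          Complex.ofReal_one, one_mul]
        rw [hr] at h3
        have hv2 : (ω 2) ⁅x, y⁆ = -(0 * ((ω 0) x * (ω 1) y - (ω 0) y * (ω 1) x)
            + A' * ((ω 0) x * (starRingEnd ℂ) ((ω 0) y) - (ω 0) y * (starRingEnd ℂ) ((ω 0) x))
            + B' * ((ω 0) x * (starRingEnd ℂ) ((ω 1) y) - (ω 0) y * (starRingEnd ℂ) ((ω 1) x))
            + C' * ((ω 1) x * (starRingEnd ℂ) ((ω 0) y) - (ω 1) y * (starRingEnd ℂ) ((ω 0) x))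
            + 0 * ((ω 1) x * (starRingEnd ℂ) ((ω 1) y) - (ω 1) y * (starRingEnd ℂ) ((ω 1) x))) := by
          linear_combination -(h3 x y)
        have hv1 : (ω 1) ⁅x, y⁆ = -(e * ((ω 0) x * (starRingEnd ℂ) ((ω 0) y)
            - (ω 0) y * (starRingEnd ℂ) ((ω 0) x))) := by
          linear_combination -(h2 x y)
        rw [hv2, hv1]
        push_cast
        field_simp
        try ring
    · refine ⟨![ω 0, e⁻¹ • ω 1, (r*e)⁻¹ • ω 2 + (-A' * (r*e)⁻¹ * e⁻¹) • ω 1],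
        0, B' * (starRingEnd ℂ) e * (r*e)⁻¹, C' * e * (r*e)⁻¹, 0, 1, 1,
        packageN2 J ω e⁻¹ (r*e)⁻¹ (-A' * (r*e)⁻¹ * e⁻¹) (inv_ne_zero he)
          (inv_ne_zero (mul_ne_zero hr he)) hbasis,
        Or.inr rfl, Or.inr rfl, ?_, ?_, ?_⟩
      · intro x y
        simpa using h1 x y
      · intro x y
        simp only [Matrix.cons_val_zero, Matrix.cons_val_one, Matrix.head_cons,
          wC, cg, LinearMap.smul_apply, smul_eq_mul, Complex.ofReal_one]
        have hv1 : (ω 1) ⁅x, y⁆ = -(e * ((ω 0) x * (starRingEnd ℂ) ((ω 0) y)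
            - (ω 0) y * (starRingEnd ℂ) ((ω 0) x))) := by
          linear_combination -(h2 x y)
        rw [hv1]
        push_cast
        field_simp
        try ring
      · intro x y
        simp only [Matrix.cons_val_zero, Matrix.cons_val_one, Matrix.head_cons,
          Matrix.cons_val_two, Matrix.tail_cons, wC, cg, LinearMap.smul_apply,
          LinearMap.add_apply, smul_eq_mul, map_mul, map_inv₀, map_neg, map_one,
          Complex.ofReal_one, one_mul]
        have hv2 : (ω 2) ⁅x, y⁆ = -(r * ((ω 0) x * (ω 1) y - (ω 0) y * (ω 1) x)
            + A' * ((ω 0) x * (starRingEnd ℂ) ((ω 0) y) - (ω 0) y * (starRingEnd ℂ) ((ω 0) x))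
            + B' * ((ω 0) x * (starRingEnd ℂ) ((ω 1) y) - (ω 0) y * (starRingEnd ℂ) ((ω 1) x))
            + C' * ((ω 1) x * (starRingEnd ℂ) ((ω 0) y) - (ω 1) y * (starRingEnd ℂ) ((ω 0) x))
            + 0 * ((ω 1) x * (starRingEnd ℂ) ((ω 1) y) - (ω 1) y * (starRingEnd ℂ) ((ω 1) x))) := by
          linear_combination -(h3 x y)
        have hv1 : (ω 1) ⁅x, y⁆ = -(e * ((ω 0) x * (starRingEnd ℂ) ((ω 0) y)
            - (ω 0) y * (starRingEnd ℂ) ((ω 0) x))) := by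
          linear_combination -(h2 x y)
        rw [hv2, hv1]
        push_cast
        simp only [mul_inv]
        have hei : e * e⁻¹ = 1 := mul_inv_cancel₀ he
        have hri : r * r⁻¹ = 1 := mul_inv_cancel₀ hr
        have hcei : (starRingEnd ℂ) e * ((starRingEnd ℂ) e)⁻¹ = 1 := mul_inv_cancel₀ hce
        linear_combination
          (-(r⁻¹*e⁻¹)*(A' * ((ω 0) x * (starRingEnd ℂ) ((ω 0) y) - (ω 0) y * (starRingEnd ℂ) ((ω 0) x))
            + C' * ((ω 1) x * (starRingEnd ℂ) ((ω 0) y) - (ω 1) y * (starRingEnd ℂ) ((ω 0) x)))) * hei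
          + (e⁻¹ * ((ω 0) x * (ω 1) y - (ω 0) y * (ω 1) x)) * hri
          + (-(r⁻¹*e⁻¹)*B' * ((ω 0) x * (starRingEnd ℂ) ((ω 1) y) - (ω 0) y * (starRingEnd ℂ) ((ω 1) x))) * hcei

end
end

section
/- Fix complex numbers A, E with |E| = 1 and a real number b ≠ 0. (1) There exist a 6-dimensional real Lie algebra g, an ℝ-linear map J : g → g with J∘J = −id, and a basis ω¹, ω², ω³ of the (1,0)-forms of (g,J) satisfying dω¹ = 0, dω² = E·(ω¹∧ω³) + ω¹∧conj(ω³), dω³ = A·(ω¹∧conj(ω¹)) + i·b·(ω¹∧conj(ω²)) − i·b·conj(E)·(ω²∧conj(ω¹)). (2) Moreover, for every 6-dimensional real Lie algebra g and ℝ-linear J with J∘J = −id admitting such a basis, the Lie algebra g is nilpotent (of nilpotency step at most 4) and J is an integrable complex structure on g which is nonnilpotent. -/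
noncomputable section

open Complex

/-- A bundled real Lie algebra. -/
structure BundledLieAlg where
  carrier : Type
  [lieRing : LieRing carrier]
  [lieAlg : LieAlgebra ℝ carrier]

attribute [instance] BundledLieAlg.lieRing BundledLieAlg.lieAlg

/-- The reduced nonnilpotent structure equations with parameters `A`, `E`, `b`. -/
def NonNilpEqs {g : Type*} [LieRing g] [LieAlgebra ℝ g]
    (ω : Fin 3 → (g →ₗ[ℝ] ℂ)) (A E : ℂ) (b : ℝ) : Prop :=
  (∀ x y : g, ω 0 ⁅x, y⁆ = 0) ∧
  (∀ x y : g, -(ω 1 ⁅x, y⁆) =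
    E * wC (ω 0) (ω 2) x y + wC (ω 0) (cg (ω 2)) x y) ∧
  (∀ x y : g, -(ω 2 ⁅x, y⁆) =
    A * wC (ω 0) (cg (ω 0)) x y + Complex.I * (b : ℂ) * wC (ω 0) (cg (ω 1)) x y
      - Complex.I * (b : ℂ) * (starRingEnd ℂ E) * wC (ω 1) (cg (ω 0)) x y)


/-! ### Auxiliary constructions for the model -/

private def mbr (A E : ℂ) (b : ℝ) (x y : Fin 3 → ℂ) : Fin 3 → ℂ :=
  ![0,
    -(E * (x 0 * y 2 - y 0 * x 2) + (x 0 * (starRingEnd ℂ) (y 2) - y 0 * (starRingEnd ℂ) (x 2))),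
    -(A * (x 0 * (starRingEnd ℂ) (y 0) - y 0 * (starRingEnd ℂ) (x 0))
      + Complex.I * (b : ℂ) * (x 0 * (starRingEnd ℂ) (y 1) - y 0 * (starRingEnd ℂ) (x 1))
      - Complex.I * (b : ℂ) * (starRingEnd ℂ) E * (x 1 * (starRingEnd ℂ) (y 0) - y 1 * (starRingEnd ℂ) (x 0)))]

private lemma conjE_eq_inv {E : ℂ} (hE : ‖E‖ = 1) : (starRingEnd ℂ) E = E⁻¹ := by
  have h1 : (starRingEnd ℂ) E * E = 1 := by
    rw [mul_comm, Complex.mul_conj]; norm_cast; simp [Complex.normSq_eq_norm_sq, hE]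
  exact eq_inv_of_mul_eq_one_left h1

private lemma E_ne_zero {E : ℂ} (hE : ‖E‖ = 1) : E ≠ 0 := by
  intro h; simp [h] at hE

private def modelLieRing (A E : ℂ) (b : ℝ) (hE : ‖E‖ = 1) : LieRing (Fin 3 → ℂ) := by
  have hE0 : E ≠ 0 := E_ne_zero hE
  have hEc : (starRingEnd ℂ) E = E⁻¹ := conjE_eq_inv hE
  exact {
    bracket := mbr A E b
    add_lie := by intros x y z; funext k; fin_cases k <;> simp [mbr] <;> ring
    lie_add := by intros x y z; funext k; fin_cases k <;> simp [mbr] <;> ring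
    lie_self := by intros x; funext k; fin_cases k <;> simp [mbr] <;> ring
    leibniz_lie := by
      intros x y z; funext k; fin_cases k <;>
        simp [mbr, map_add, map_sub, map_mul, map_neg, Complex.conj_conj, Complex.conj_I,
          Complex.conj_ofReal, hEc] <;>
      field_simp <;> ring }

private noncomputable def modelLieAlgebra (A E : ℂ) (b : ℝ) (hE : ‖E‖ = 1) :
    @LieAlgebra ℝ (Fin 3 → ℂ) _ (modelLieRing A E b hE) := by
  letI := modelLieRing A E b hE
  exact {
    toModule := Pi.Function.module (Fin 3) ℝ ℂ
    lie_smul := by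
      intros t x y
      show mbr A E b x (t • y) = t • mbr A E b x y
      funext k; fin_cases k <;>
        simp [mbr, Complex.real_smul, map_mul, Complex.conj_ofReal] <;> ring }

private def modelJ : (Fin 3 → ℂ) →ₗ[ℝ] (Fin 3 → ℂ) where
  toFun x := fun k => Complex.I * x k
  map_add' x y := by funext k; simp; ring
  map_smul' t x := by funext k; simp [Complex.real_smul]; ring

private def modelω (k : Fin 3) : (Fin 3 → ℂ) →ₗ[ℝ] ℂ := LinearMap.proj k

private lemma modelω_indep : LinearIndependent ℂ modelω := by
  rw [Fintype.linearIndependent_iff]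
  intro c hc k
  have h := congrArg (fun (f : (Fin 3 → ℂ) →ₗ[ℝ] ℂ) => f (Pi.single k 1)) hc
  simpa [modelω, LinearMap.sum_apply, Pi.single_apply, Finset.sum_ite_eq'] using h

private lemma modelω_span (η : (Fin 3 → ℂ) →ₗ[ℝ] ℂ)
    (hη : ∀ x, η (modelJ x) = Complex.I * η x) :
    η ∈ Submodule.span ℂ (Set.range modelω) := by
  have key : η = ∑ k : Fin 3, η (Pi.single k 1) • modelω k := by
    refine LinearMap.ext fun x => ?_
    have hx : x = ∑ k : Fin 3, (((x k).re : ℝ) • (Pi.single k (1:ℂ) : Fin 3 → ℂ)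
        + ((x k).im : ℝ) • modelJ (Pi.single k (1:ℂ) : Fin 3 → ℂ)) := by
      funext j
      simp only [Finset.sum_apply, Pi.add_apply, Pi.smul_apply, modelJ, LinearMap.coe_mk,
        AddHom.coe_mk, Pi.single_apply, Complex.real_smul, mul_ite, mul_zero, mul_one]
      rw [Finset.sum_add_distrib]
      simp only [Finset.sum_ite_eq, Finset.mem_univ, if_true]
      exact (Complex.re_add_im _).symm
    conv_lhs => rw [hx]
    rw [map_sum]
    simp only [map_add, map_smul, hη, LinearMap.sum_apply, LinearMap.smul_apply]
    refine Finset.sum_congr rfl fun k _ => ?_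
    simp only [modelω, LinearMap.proj_apply, Complex.real_smul, smul_eq_mul]
    conv_rhs => rw [← Complex.re_add_im (x k)]
    ring
  rw [key]
  exact Submodule.sum_mem _ fun k _ => Submodule.smul_mem _ _ (Submodule.subset_span ⟨k, rfl⟩)

/-! ### Generic facts for part 2 -/

section Part2

variable {g : Type*} [LieRing g] [LieAlgebra ℝ g]

private lemma omega_inj (J : g →ₗ[ℝ] g) (hJJ : ∀ x, J (J x) = -x)
    (ω : Fin 3 → (g →ₗ[ℝ] ℂ)) (hω : IsOneZeroBasis J ω)
    {x : g} (hx : ∀ k, ω k x = 0) : x = 0 := by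
  by_contra hx0
  obtain ⟨f, hf⟩ : ∃ f : Module.Dual ℝ g, f x ≠ 0 := by
    by_contra hc
    push_neg at hc
    exact hx0 ((Module.forall_dual_apply_eq_zero_iff ℝ x).mp hc)
  set η : g →ₗ[ℝ] ℂ :=
    { toFun := fun y => (f y : ℂ) - Complex.I * (f (J y) : ℂ)
      map_add' := by intros; push_cast [map_add]; ring
      map_smul' := by intros; push_cast [map_smul]; simp [Complex.real_smul]; ring } with hηdef
  have hη : IsOneZero J η := by
    intro y
    simp only [hηdef, LinearMap.coe_mk, AddHom.coe_mk, hJJ, map_neg]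
    push_cast
    linear_combination (↑(f (J y)) : ℂ) * Complex.I_sq
  obtain ⟨c, hc⟩ := Submodule.mem_span_range_iff_exists_fun ℂ |>.mp (hω.2.2 η hη)
  have h0 : η x = 0 := by
    rw [← hc]
    simp [LinearMap.sum_apply, hx]
  have : f x = 0 := by
    have := congrArg Complex.re h0
    simpa [hηdef] using this
  exact hf this

private lemma omega_surj (J : g →ₗ[ℝ] g) (hJJ : ∀ x, J (J x) = -x)
    (ω : Fin 3 → (g →ₗ[ℝ] ℂ)) (hω : IsOneZeroBasis J ω)
    (hrank : Module.finrank ℝ g = 6) (v : Fin 3 → ℂ) : ∃ y : g, ∀ k, ω k y = v k := by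
  haveI : FiniteDimensional ℝ g := FiniteDimensional.of_finrank_pos (by omega)
  set Φ : g →ₗ[ℝ] (Fin 3 → ℂ) := LinearMap.pi ω with hΦ
  have hinj : Function.Injective Φ := by
    rw [← LinearMap.ker_eq_bot, LinearMap.ker_eq_bot']
    intro m hm
    refine omega_inj J hJJ ω hω fun k => ?_
    exact congrFun hm k
  have hsurj : Function.Surjective Φ := by
    refine (LinearMap.injective_iff_surjective_of_finrank_eq_finrank ?_).mp hinj
    rw [hrank]
    simp [Module.finrank_pi_fintype, Complex.finrank_real_complex]
  obtain ⟨y, hy⟩ := hsurj v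
  exact ⟨y, fun k => congrFun hy k⟩

end Part2


private lemma I_pow_three : Complex.I ^ 3 = -Complex.I := by
  rw [pow_succ, Complex.I_sq]; ring

private noncomputable def modelG (A E : ℂ) (b : ℝ) (hE : ‖E‖ = 1) : BundledLieAlg :=
  { carrier := Fin 3 → ℂ
    lieRing := modelLieRing A E b hE
    lieAlg := modelLieAlgebra A E b hE }

private theorem part2core {A E : ℂ} (hE : ‖E‖ = 1) {b : ℝ} (hb : b ≠ 0)
    {g : Type*} [LieRing g] [LieAlgebra ℝ g] (J : g →ₗ[ℝ] g)
    (ω : Fin 3 → (g →ₗ[ℝ] ℂ)) (hrank : Module.finrank ℝ g = 6)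
    (hJJ : ∀ x, J (J x) = -x) (hω : IsOneZeroBasis J ω) (heq : NonNilpEqs ω A E b) :
    lcs g 4 = ⊥ ∧ IsComplexStructure J ∧ ¬ IsNilpotentJ J := by
  have hE0 : E ≠ 0 := E_ne_zero hE
  have hEc : (starRingEnd ℂ) E = E⁻¹ := conjE_eq_inv hE
  have hbC : (b : ℂ) ≠ 0 := Complex.ofReal_ne_zero.mpr hb
  obtain ⟨h0, h1', h2'⟩ := heq
  have h1 : ∀ x y : g, ω 1 ⁅x, y⁆ =
      -(E * (ω 0 x * ω 2 y - ω 0 y * ω 2 x)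
        + (ω 0 x * (starRingEnd ℂ) (ω 2 y) - ω 0 y * (starRingEnd ℂ) (ω 2 x))) := by
    intro x y
    have h := h1' x y
    simp only [wC, cg] at h
    linear_combination -h
  have h2 : ∀ x y : g, ω 2 ⁅x, y⁆ =
      -(A * (ω 0 x * (starRingEnd ℂ) (ω 0 y) - ω 0 y * (starRingEnd ℂ) (ω 0 x))
        + Complex.I * (b : ℂ) * (ω 0 x * (starRingEnd ℂ) (ω 1 y) - ω 0 y * (starRingEnd ℂ) (ω 1 x))
        - Complex.I * (b : ℂ) * (starRingEnd ℂ) E *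
            (ω 1 x * (starRingEnd ℂ) (ω 0 y) - ω 1 y * (starRingEnd ℂ) (ω 0 x))) := by
    intro x y
    have h := h2' x y
    simp only [wC, cg] at h
    linear_combination -h
  have hJω : ∀ (k : Fin 3) (x : g), ω k (J x) = Complex.I * ω k x := fun k => hω.1 k
  have hinj : ∀ x : g, (∀ k, ω k x = 0) → x = 0 := fun x hx => omega_inj J hJJ ω hω hx
  -- key bracket vanishing facts
  have key2 : ∀ x y : g, ω 0 x = 0 →
      E * ω 2 ⁅x, y⁆ + (starRingEnd ℂ) (ω 2 ⁅x, y⁆) = 0 := by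
    intro x y hx0
    have hcx0 : (starRingEnd ℂ) (ω 0 x) = 0 := by rw [hx0, map_zero]
    rw [h2]
    simp only [map_neg, map_add, map_sub, map_mul, map_inv₀, Complex.conj_conj, Complex.conj_I,
      Complex.conj_ofReal, hx0, hcx0, hEc, inv_inv, map_zero]
    field_simp
    ring
  have key3 : ∀ x y : g, ω 0 x = 0 → E * ω 2 x + (starRingEnd ℂ) (ω 2 x) = 0 →
      ω 1 ⁅x, y⁆ = 0 := by
    intro x y hx0 hτ
    have hcx0 : (starRingEnd ℂ) (ω 0 x) = 0 := by rw [hx0, map_zero]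
    rw [h1, hx0]
    linear_combination (ω 0 y) * hτ
  have key4 : ∀ x y : g, ω 0 x = 0 → ω 1 x = 0 → E * ω 2 x + (starRingEnd ℂ) (ω 2 x) = 0 →
      ⁅x, y⁆ = 0 := by
    intro x y hx0 hx1 hτ
    have hcx0 : (starRingEnd ℂ) (ω 0 x) = 0 := by rw [hx0, map_zero]
    have hcx1 : (starRingEnd ℂ) (ω 1 x) = 0 := by rw [hx1, map_zero]
    apply hinj
    intro k
    fin_cases k
    · exact h0 x y
    · exact key3 x y hx0 hτ
    · show (ω 2) ⁅x, y⁆ = 0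
      rw [h2, hcx0, hcx1, hx0, hx1]; ring
  -- the descending central series
  let conjL : ℂ →ₗ[ℝ] ℂ := Complex.conjAe.toLinearMap
  let τ : g →ₗ[ℝ] ℂ := E • ω 2 + conjL ∘ₗ ω 2
  have hτapp : ∀ x : g, τ x = E * ω 2 x + (starRingEnd ℂ) (ω 2 x) := by
    intro x
    simp [τ, conjL, Complex.conjAe]
  have l1 : lcs g 1 ≤ LinearMap.ker (ω 0) := by
    show Submodule.span ℝ {z | ∃ x ∈ lcs g 0, ∃ y : g, z = ⁅x, y⁆} ≤ _
    rw [Submodule.span_le]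
    rintro z ⟨x, -, y, rfl⟩
    exact LinearMap.mem_ker.mpr (h0 x y)
  have l2 : lcs g 2 ≤ LinearMap.ker (ω 0) ⊓ LinearMap.ker τ := by
    show Submodule.span ℝ {z | ∃ x ∈ lcs g 1, ∃ y : g, z = ⁅x, y⁆} ≤ _
    rw [Submodule.span_le]
    rintro z ⟨x, hx, y, rfl⟩
    have hx0 : ω 0 x = 0 := l1 hx
    refine Submodule.mem_inf.mpr ⟨LinearMap.mem_ker.mpr (h0 x y), LinearMap.mem_ker.mpr ?_⟩
    rw [hτapp]
    exact key2 x y hx0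
  have l3 : lcs g 3 ≤ (LinearMap.ker (ω 0) ⊓ LinearMap.ker τ) ⊓ LinearMap.ker (ω 1) := by
    show Submodule.span ℝ {z | ∃ x ∈ lcs g 2, ∃ y : g, z = ⁅x, y⁆} ≤ _
    rw [Submodule.span_le]
    rintro z ⟨x, hx, y, rfl⟩
    obtain ⟨hx0, hxτ⟩ := Submodule.mem_inf.mp (l2 hx)
    have hx0' : ω 0 x = 0 := hx0
    have hxτ' : E * ω 2 x + (starRingEnd ℂ) (ω 2 x) = 0 := by
      have := LinearMap.mem_ker.mp hxτ
      rwa [hτapp] at this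
    refine Submodule.mem_inf.mpr ⟨Submodule.mem_inf.mpr
      ⟨LinearMap.mem_ker.mpr (h0 x y), LinearMap.mem_ker.mpr ?_⟩, LinearMap.mem_ker.mpr ?_⟩
    · rw [hτapp]
      exact key2 x y hx0'
    · exact key3 x y hx0' hxτ'
  have l4 : lcs g 4 = ⊥ := by
    rw [eq_bot_iff]
    show Submodule.span ℝ {z | ∃ x ∈ lcs g 3, ∃ y : g, z = ⁅x, y⁆} ≤ ⊥
    rw [Submodule.span_le]
    rintro z ⟨x, hx, y, rfl⟩
    have hmem := l3 hx
    obtain ⟨h12, hx1⟩ := Submodule.mem_inf.mp hmem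
    obtain ⟨hx0, hxτ⟩ := Submodule.mem_inf.mp h12
    have hxτ' : E * ω 2 x + (starRingEnd ℂ) (ω 2 x) = 0 := by
      have := LinearMap.mem_ker.mp hxτ
      rwa [hτapp] at this
    have hz : ⁅x, y⁆ = 0 := key4 x y hx0 (LinearMap.mem_ker.mp hx1) hxτ'
    rw [hz]
    simp
  -- integrability
  have hint : ∀ x y : g, ⁅J x, J y⁆ = J ⁅J x, y⁆ + J ⁅x, J y⁆ + ⁅x, y⁆ := by
    intro x y
    have hd : ∀ k, ω k (⁅J x, J y⁆ - (J ⁅J x, y⁆ + J ⁅x, J y⁆ + ⁅x, y⁆)) = 0 := by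
      intro k
      rw [map_sub, map_add, map_add, hJω, hJω]
      fin_cases k
      · simp [h0]
      · show (ω 1) ⁅J x, J y⁆ - (Complex.I * (ω 1) ⁅J x, y⁆ + Complex.I * (ω 1) ⁅x, J y⁆
            + (ω 1) ⁅x, y⁆) = 0
        rw [h1, h1, h1, h1]
        simp only [hJω, map_mul, Complex.conj_I]
        ring_nf
        simp only [Complex.I_sq, _root_.I_pow_three]
        ring
      · show (ω 2) ⁅J x, J y⁆ - (Complex.I * (ω 2) ⁅J x, y⁆ + Complex.I * (ω 2) ⁅x, J y⁆
            + (ω 2) ⁅x, y⁆) = 0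
        rw [h2, h2, h2, h2]
        simp only [hJω, map_mul, Complex.conj_I]
        ring_nf
        simp only [Complex.I_sq, _root_.I_pow_three]
        ring
    have := hinj _ hd
    rwa [sub_eq_zero] at this
  -- nonnilpotency
  have hsurj := omega_surj J hJJ ω hω hrank
  have main : ∀ u : g, (∀ y : g, ⁅u, y⁆ = 0) →
      ω 0 u = 0 ∧ ω 1 u = 0 ∧ E * ω 2 u + (starRingEnd ℂ) (ω 2 u) = 0 := by
    intro u hu
    obtain ⟨ya, hya⟩ := hsurj ![0, 0, 1]
    obtain ⟨yb, hyb⟩ := hsurj ![0, 0, Complex.I]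
    obtain ⟨yc, hyc⟩ := hsurj ![1, 0, 0]
    obtain ⟨yd, hyd⟩ := hsurj ![Complex.I, 0, 0]
    have ea := h1 u ya
    rw [hu ya, map_zero, hya 0, hya 2] at ea
    simp at ea
    have eb := h1 u yb
    rw [hu yb, map_zero, hyb 0, hyb 2] at eb
    simp at eb
    have ec := h2 u yc
    rw [hu yc, map_zero, hyc 0, hyc 1] at ec
    simp at ec
    have ed := h2 u yd
    rw [hu yd, map_zero, hyd 0, hyd 1] at ed
    simp at ed
    have e3 := h1 u yc
    rw [hu yc, map_zero, hyc 0, hyc 2] at e3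
    simp at e3
    have hb' : (1 - E) * ω 0 u = 0 :=
      mul_left_cancel₀ Complex.I_ne_zero (by linear_combination -eb)
    have ha0 : ω 0 u = 0 := by linear_combination ea / 2 + hb' / 2
    have hca0 : (starRingEnd ℂ) (ω 0 u) = 0 := by rw [ha0, map_zero]
    rw [ha0] at ec ed
    simp only [map_zero, mul_zero, zero_mul, sub_zero, zero_sub, neg_zero, add_zero,
      zero_add, neg_neg] at ec ed
    have hc' : (starRingEnd ℂ) (ω 1 u) + (starRingEnd ℂ) E * (ω 1 u) = 0 :=
      mul_left_cancel₀ (mul_ne_zero Complex.I_ne_zero hbC) (by linear_combination -ec)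
    have hd' : (starRingEnd ℂ) (ω 1 u) - (starRingEnd ℂ) E * (ω 1 u) = 0 :=
      mul_left_cancel₀ (mul_ne_zero (mul_ne_zero Complex.I_ne_zero Complex.I_ne_zero) hbC)
        (by linear_combination -ed)
    have hca1 : (starRingEnd ℂ) (ω 1 u) = 0 := by linear_combination hc' / 2 + hd' / 2
    have ha1 : ω 1 u = 0 := by
      have h := congrArg (starRingEnd ℂ) hca1
      simpa using h
    have hτu : E * ω 2 u + (starRingEnd ℂ) (ω 2 u) = 0 := by linear_combination -e3
    exact ⟨ha0, ha1, hτu⟩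
  have hcent : ∀ x : g, (∀ y : g, ⁅x, y⁆ = 0) → (∀ y : g, ⁅J x, y⁆ = 0) → x = 0 := by
    intro x hxy hJxy
    obtain ⟨ha0, ha1, hτx⟩ := main x hxy
    obtain ⟨-, -, hτJx⟩ := main (J x) hJxy
    rw [hJω] at hτJx
    simp only [map_mul, Complex.conj_I] at hτJx
    have h6 : E * ω 2 x - (starRingEnd ℂ) (ω 2 x) = 0 :=
      mul_left_cancel₀ Complex.I_ne_zero (by linear_combination hτJx)
    have hE2 : E * ω 2 x = 0 := by linear_combination hτx / 2 + h6 / 2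
    have ha2 : ω 2 x = 0 := by
      rcases mul_eq_zero.mp hE2 with h | h
      · exact absurd h hE0
      · exact h
    apply hinj
    intro k
    fin_cases k
    · exact ha0
    · exact ha1
    · exact ha2
  have hasc : ∀ l, ascSeries J l = {0} := by
    intro l
    induction l with
    | zero => rfl
    | succ l ih =>
        ext x
        simp only [ascSeries, ih, Set.mem_setOf_eq, Set.mem_singleton_iff]
        constructor
        · rintro ⟨hx1, hx2⟩
          exact hcent x hx1 hx2
        · rintro rfl
          constructor <;> intro y <;> simp [zero_lie, map_zero]
  refine ⟨l4, ⟨hJJ, hint⟩, ?_⟩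
  rintro ⟨l, hl⟩
  rw [hasc l] at hl
  obtain ⟨y, hy⟩ := hsurj ![1, 0, 0]
  have hy0 : y = 0 := by
    have hmem : y ∈ ({0} : Set g) := by rw [hl]; trivial
    simpa using hmem
  have hone := hy 0
  rw [hy0, map_zero] at hone
  simp at hone

/-- the reduced nonnilpotent equations are admissible, and any Lie
algebra carrying them is nilpotent (in step at most 4) with `J` an integrable
nonnilpotent complex structure. -/
theorem nonnilpotent_equations_admissible (A E : ℂ) (hE : ‖E‖ = 1)
    (b : ℝ) (hb : b ≠ 0) :
    (∃ (G : BundledLieAlg) (J : G.carrier →ₗ[ℝ] G.carrier)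
        (ω : Fin 3 → (G.carrier →ₗ[ℝ] ℂ)),
      Module.finrank ℝ G.carrier = 6 ∧ (∀ x, J (J x) = -x) ∧
      IsOneZeroBasis J ω ∧ NonNilpEqs ω A E b) ∧
    (∀ (g : Type*) [LieRing g] [LieAlgebra ℝ g], ∀ (J : g →ₗ[ℝ] g)
        (ω : Fin 3 → (g →ₗ[ℝ] ℂ)),
      Module.finrank ℝ g = 6 → (∀ x, J (J x) = -x) →
      IsOneZeroBasis J ω → NonNilpEqs ω A E b →
      lcs g 4 = ⊥ ∧ IsComplexStructure J ∧ ¬ IsNilpotentJ J) := by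
  constructor
  · refine ⟨modelG A E b hE, modelJ, modelω, ?_, ?_, ?_, ?_⟩
    · show Module.finrank ℝ (Fin 3 → ℂ) = 6
      simp [Module.finrank_pi_fintype, Complex.finrank_real_complex]
    · intro x
      show modelJ (modelJ x) = -x
      funext k
      show Complex.I * (Complex.I * x k) = (-x) k
      show Complex.I * (Complex.I * x k) = -(x k)
      rw [← mul_assoc, Complex.I_mul_I]
      ring
    · refine ⟨fun k x => ?_, modelω_indep, fun η hη => modelω_span η hη⟩
      show modelω k (modelJ x) = Complex.I * modelω k x
      simp [modelω, modelJ]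
    · refine ⟨fun x y => rfl, fun x y => ?_, fun x y => ?_⟩
      · show -(modelω 1 (mbr A E b x y)) = _
        simp only [modelω, mbr, wC, cg, LinearMap.proj, LinearMap.coe_mk, AddHom.coe_mk,
          Function.eval, Matrix.cons_val_one, Matrix.head_cons, neg_neg]
        exact neg_neg _
      · show -(modelω 2 (mbr A E b x y)) = _
        simp only [modelω, mbr, wC, cg, LinearMap.proj, LinearMap.coe_mk, AddHom.coe_mk,
          Function.eval, neg_neg]
        norm_num
        show -(I * ↑b * (starRingEnd ℂ) E * (x 1 * (starRingEnd ℂ) (y 0) - y 1 * (starRingEnd ℂ) (x 0)) - (A * (x 0 * (starRingEnd ℂ) (y 0) - y 0 * (starRingEnd ℂ) (x 0)) + I * ↑b * (x 0 * (starRingEnd ℂ) (y 1) - y 0 * (starRingEnd ℂ) (x 1)))) = A * (x 0 * (starRingEnd ℂ) (y 0) - y 0 * (starRingEnd ℂ) (x 0)) + I * ↑b * (x 0 * (starRingEnd ℂ) (y 1) - y 0 * (starRingEnd ℂ) (x 1)) - I * ↑b * (starRingEnd ℂ) E * (x 1 * (starRingEnd ℂ) (y 0) - y 1 * (starRingEnd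 ℂ) (x 0))
        ring
  · intro g _ _ J ω hrank hJJ hbasis heq
    exact part2core hE hb J ω hrank hJJ hbasis heq

end
end

section
/- Let g be a 6-dimensional real Lie algebra with a complex structure J admitting a basis ω¹, ω², ω³ of (1,0)-forms with dω¹ = dω² = 0 and dω³ = ρ·(ω¹∧ω²) + ω¹∧conj(ω¹) + B·(ω¹∧conj(ω²)) + D·(ω²∧conj(ω²)), where B, D ∈ ℂ and ρ ∈ {0,1}. Then the center of g has dimension ≥ 3 if and only if |B| = ρ and D = 0. -/
noncomputable section

open Complex

/-- for the reduced equations, the center has dimension at least 3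
iff `|B| = ρ` and `D = 0`. -/
theorem center_ge_three_iff
    (g : Type*) [LieRing g] [LieAlgebra ℝ g]
    (hdim : Module.finrank ℝ g = 6)
    (J : g →ₗ[ℝ] g) (hJ : IsComplexStructure J)
    (ω : Fin 3 → (g →ₗ[ℝ] ℂ)) (B D : ℂ) (ρ : ℝ)
    (hω : IsOneZeroBasis J ω) (hρ : ρ = 0 ∨ ρ = 1)
    (h1 : ∀ x y : g, ω 0 ⁅x, y⁆ = 0) (h2 : ∀ x y : g, ω 1 ⁅x, y⁆ = 0)
    (h3 : ∀ x y : g, -(ω 2 ⁅x, y⁆) =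
      (ρ : ℂ) * wC (ω 0) (ω 1) x y + wC (ω 0) (cg (ω 0)) x y
        + B * wC (ω 0) (cg (ω 1)) x y + D * wC (ω 1) (cg (ω 1)) x y) :
    3 ≤ Module.finrank ℝ (centerS g) ↔ (‖B‖ = ρ ∧ D = 0) := by
  classical
  have hFD : FiniteDimensional ℝ g := FiniteDimensional.of_finrank_pos (by rw [hdim]; norm_num)
  -- the comparison map
  set Φ : g →ₗ[ℝ] (Fin 3 → ℂ) := LinearMap.pi ω with hΦdef
  have hΦapp : ∀ (x : g) (k : Fin 3), Φ x k = ω k x := fun x k => rfl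
  -- injectivity of Φ
  have hinj : Function.Injective Φ := by
    rw [← LinearMap.ker_eq_bot, LinearMap.ker_eq_bot']
    intro x hx
    have hvals : ∀ k, ω k x = 0 := fun k => by
      have := congrFun hx k; simpa [hΦapp] using this
    have hspan : ∀ η : g →ₗ[ℝ] ℂ, η ∈ Submodule.span ℂ (Set.range ω) → η x = 0 := by
      let ev : (g →ₗ[ℝ] ℂ) →ₗ[ℂ] ℂ :=
        { toFun := fun f => f x
          map_add' := fun f₁ f₂ => rfl
          map_smul' := fun c f => rfl }
      intro η hη
      have hle : Submodule.span ℂ (Set.range ω) ≤ LinearMap.ker ev := by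
        rw [Submodule.span_le]
        rintro f ⟨k, rfl⟩
        exact hvals k
      exact hle hη
    refine (Module.forall_dual_apply_eq_zero_iff ℝ x).mp ?_
    intro φ
    set η : g →ₗ[ℝ] ℂ :=
      { toFun := fun z => (φ z : ℂ) - Complex.I * (φ (J z) : ℂ)
        map_add' := by intro a b; push_cast [map_add]; ring
        map_smul' := by
          intro c a
          simp only [map_smul, smul_eq_mul, RingHom.id_apply, Complex.real_smul,
            Complex.ofReal_mul]
          ring } with hηdef
    have hone : IsOneZero J η := by
      intro z
      show (φ (J z) : ℂ) - Complex.I * (φ (J (J z)) : ℂ)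
          = Complex.I * ((φ z : ℂ) - Complex.I * (φ (J z) : ℂ))
      rw [hJ.1 z, map_neg]
      push_cast
      linear_combination ((φ (J z) : ℂ)) * Complex.I_sq
    have h0 : (φ x : ℂ) - Complex.I * (φ (J x) : ℂ) = 0 := hspan η (hω.2.2 η hone)
    have := congrArg Complex.re h0
    simpa using this
  -- surjectivity of Φ
  have hsurj : Function.Surjective Φ := by
    refine (LinearMap.injective_iff_surjective_of_finrank_eq_finrank ?_).mp hinj
    rw [hdim]
    simp [Module.finrank_pi_fintype, Complex.finrank_real_complex]
  have hget : ∀ u v w : ℂ, ∃ y : g, ω 0 y = u ∧ ω 1 y = v ∧ ω 2 y = w := by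
    intro u v w
    obtain ⟨y, hy⟩ := hsurj ![u, v, w]
    exact ⟨y, by simpa [hΦapp] using congrFun hy 0,
      by simpa [hΦapp] using congrFun hy 1, by simpa [hΦapp] using congrFun hy 2⟩
  have hmem : ∀ x : g, x ∈ centerS g ↔ ∀ y : g, ⁅x, y⁆ = 0 := fun x => Iff.rfl
  -- characterization of the center
  have hcen : ∀ x : g, x ∈ centerS g ↔
      (ω 0 x = 0 ∧ (ρ : ℂ) * ω 1 x + B * (starRingEnd ℂ) (ω 1 x) = 0 ∧ D * ω 1 x = 0) := by
    intro x
    constructor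
    · intro hx
      have E : ∀ y : g,
          (ρ : ℂ) * (ω 0 x * ω 1 y - ω 0 y * ω 1 x)
          + (ω 0 x * (starRingEnd ℂ) (ω 0 y) - ω 0 y * (starRingEnd ℂ) (ω 0 x))
          + B * (ω 0 x * (starRingEnd ℂ) (ω 1 y) - ω 0 y * (starRingEnd ℂ) (ω 1 x))
          + D * (ω 1 x * (starRingEnd ℂ) (ω 1 y) - ω 1 y * (starRingEnd ℂ) (ω 1 x)) = 0 := by
        intro y
        have h := h3 x y
        rw [(hmem x).mp hx y, map_zero, neg_zero] at h
        simpa [wC, cg] using h.symm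
      obtain ⟨y1, hy10, hy11, -⟩ := hget 1 0 0
      obtain ⟨y2, hy20, hy21, -⟩ := hget Complex.I 0 0
      obtain ⟨y3, hy30, hy31, -⟩ := hget 0 1 0
      obtain ⟨y4, hy40, hy41, -⟩ := hget 0 Complex.I 0
      have e1 := E y1; rw [hy10, hy11] at e1
      have e2 := E y2; rw [hy20, hy21] at e2
      have e3 := E y3; rw [hy30, hy31] at e3
      have e4 := E y4; rw [hy40, hy41] at e4
      simp only [map_zero, map_one, Complex.conj_I] at e1 e2 e3 e4
      have ha : ω 0 x = 0 := by
        linear_combination (1/2 : ℂ) * e1 + (Complex.I / 2) * e2 + (((ρ:ℂ) * ω 1 x + ω 0 x + (starRingEnd ℂ) (ω 0 x) + B * (starRingEnd ℂ) (ω 1 x)) / 2) * Complex.I_sq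
      have hca : (starRingEnd ℂ) (ω 0 x) = 0 := by rw [ha]; simp
      have hb : (ρ : ℂ) * ω 1 x + B * (starRingEnd ℂ) (ω 1 x) = 0 := by
        linear_combination (-1/2 : ℂ) * e1 + (Complex.I / 2) * e2 - hca + (((ρ:ℂ) * ω 1 x + ω 0 x + (starRingEnd ℂ) (ω 0 x) + B * (starRingEnd ℂ) (ω 1 x)) / 2) * Complex.I_sq
      have hDb : D * ω 1 x = 0 := by
        linear_combination (1/2 : ℂ) * e3 + (Complex.I / 2) * e4 - B * ha - (((ρ:ℂ) * ω 0 x - B * ω 0 x - D * ω 1 x - D * (starRingEnd ℂ) (ω 1 x)) / 2) * Complex.I_sq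
      exact ⟨ha, hb, hDb⟩
    · rintro ⟨ha, hb, hDb⟩
      rw [hmem]
      intro y
      have hca : (starRingEnd ℂ) (ω 0 x) = 0 := by rw [ha]; simp
      have hDcb : D * (starRingEnd ℂ) (ω 1 x) = 0 := by
        rcases mul_eq_zero.mp hDb with h | h
        · rw [h, zero_mul]
        · rw [h]; simp
      apply hinj
      rw [map_zero]
      funext k
      rw [hΦapp]
      fin_cases k
      · exact h1 x y
      · exact h2 x y
      · show ω 2 ⁅x, y⁆ = 0
        have h := h3 x y
        simp only [wC, cg] at h
        linear_combination (-1 : ℂ) * h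
          + (-(ρ : ℂ) * ω 1 y - (starRingEnd ℂ) (ω 0 y) - B * (starRingEnd ℂ) (ω 1 y)) * ha
          + (ω 0 y) * hca + (ω 0 y) * hb
          - (starRingEnd ℂ) (ω 1 y) * hDb + (ω 1 y) * hDcb
  have hρnn : (0 : ℝ) ≤ ρ := by rcases hρ with h | h <;> simp [h]
  constructor
  · -- forward direction
    intro h3le
    have hex : ∃ x, x ∈ centerS g ∧ ω 1 x ≠ 0 := by
      by_contra hno
      push_neg at hno
      set Ψ : g →ₗ[ℝ] ℂ × ℂ := (ω 0).prod (ω 1) with hΨdef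
      have hΨsurj : Function.Surjective Ψ := by
        rintro ⟨u, v⟩
        obtain ⟨y, hy0, hy1, -⟩ := hget u v 0
        exact ⟨y, by simp [hΨdef, LinearMap.prod_apply, hy0, hy1]⟩
      have hker : Module.finrank ℝ (LinearMap.ker Ψ) = 2 := by
        have hr := LinearMap.finrank_range_add_finrank_ker Ψ
        rw [LinearMap.range_eq_top.mpr hΨsurj, finrank_top, hdim] at hr
        have : Module.finrank ℝ (ℂ × ℂ) = 4 := by
          simp [Module.finrank_prod, Complex.finrank_real_complex]
        omega
      have hle : centerS g ≤ LinearMap.ker Ψ := by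
        intro x hx
        obtain ⟨ha, -, -⟩ := (hcen x).mp hx
        have hb := hno x hx
        simp [LinearMap.mem_ker, hΨdef, LinearMap.prod_apply, ha, hb, Prod.ext_iff]
      have := Submodule.finrank_mono hle
      rw [hker] at this
      omega
    obtain ⟨x, hx, hbne⟩ := hex
    obtain ⟨ha, hb, hDb⟩ := (hcen x).mp hx
    have hD : D = 0 := (mul_eq_zero.mp hDb).resolve_right hbne
    refine ⟨?_, hD⟩
    have hb' : (ρ : ℂ) * ω 1 x = -(B * (starRingEnd ℂ) (ω 1 x)) := by
      linear_combination hb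
    have hbabs : ‖ω 1 x‖ ≠ 0 := by
      simpa using hbne
    have habs : ρ * ‖ω 1 x‖ = ‖B‖ * ‖ω 1 x‖ := by
      have h' := congrArg norm hb'
      rwa [norm_mul, norm_neg, norm_mul, Complex.norm_conj, Complex.norm_real, Real.norm_eq_abs,
        _root_.abs_of_nonneg hρnn] at h'
    exact (mul_right_cancel₀ hbabs habs).symm
  · -- backward direction
    rintro ⟨hB, hD⟩
    obtain ⟨b0, hb0ne, hb0eq⟩ : ∃ b0 : ℂ, b0 ≠ 0 ∧
        (ρ : ℂ) * b0 + B * (starRingEnd ℂ) b0 = 0 := by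
      rcases hρ with h | h
      · have hB0 : B = 0 := by
          rw [h] at hB
          exact norm_eq_zero.mp hB
        exact ⟨1, one_ne_zero, by rw [h, hB0]; simp⟩
      · have hBB : B * (starRingEnd ℂ) B = 1 := by
          rw [Complex.mul_conj, Complex.normSq_eq_norm_sq, hB, h]
          norm_num
        by_cases hB1 : B = 1
        · refine ⟨2 * Complex.I, by simp, ?_⟩
          rw [h, hB1]
          simp [Complex.ext_iff]
        · refine ⟨1 - B, sub_ne_zero.mpr (fun hc => hB1 hc.symm), ?_⟩
          rw [h]
          push_cast
          have : (starRingEnd ℂ) (1 - B) = 1 - (starRingEnd ℂ) B := by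
            rw [map_sub, map_one]
          rw [this]
          linear_combination -hBB
    obtain ⟨x1, h1a, h1b, h1c⟩ := hget 0 b0 0
    obtain ⟨x2, h2a, h2b, h2c⟩ := hget 0 0 1
    obtain ⟨x3, h3a, h3b, h3c⟩ := hget 0 0 Complex.I
    have m1 : x1 ∈ centerS g := (hcen x1).mpr ⟨h1a, by rw [h1b]; exact hb0eq,
      by rw [h1b, hD, zero_mul]⟩
    have m2 : x2 ∈ centerS g := (hcen x2).mpr ⟨h2a, by rw [h2b]; simp, by rw [h2b, mul_zero]⟩
    have m3 : x3 ∈ centerS g := (hcen x3).mpr ⟨h3a, by rw [h3b]; simp, by rw [h3b, mul_zero]⟩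
    set v : Fin 3 → centerS g := ![⟨x1, m1⟩, ⟨x2, m2⟩, ⟨x3, m3⟩] with hvdef
    have hv : LinearIndependent ℝ v := by
      have hcomp : LinearIndependent ℝ ((Φ.comp (centerS g).subtype) ∘ v) := by
        rw [Fintype.linearIndependent_iff]
        intro r hr
        have hr1 := congrFun hr 1
        have hr2 := congrFun hr 2
        simp only [Fin.sum_univ_three, hvdef, Function.comp_apply, LinearMap.comp_apply,
          Submodule.coe_subtype, Matrix.cons_val_zero, Matrix.cons_val_one, Matrix.head_cons,
          Matrix.cons_val_two, Matrix.tail_cons, Pi.add_apply, Pi.smul_apply, Pi.zero_apply,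
          hΦapp, h1b, h2b, h3b, h1c, h2c, h3c, smul_zero, add_zero, zero_add,
          Complex.real_smul, mul_one] at hr1 hr2
        have hr10 : r 0 = 0 := by
          have := mul_eq_zero.mp hr1
          rcases this with h | h
          · exact_mod_cast h
          · exact absurd h hb0ne
        have hr20 : r 1 = 0 ∧ r 2 = 0 := by
          have hre := congrArg Complex.re hr2
          have him := congrArg Complex.im hr2
          simp at hre him
          exact ⟨hre, him⟩
        intro i
        fin_cases i
        · exact hr10
        · exact hr20.1
        · exact hr20.2
      exact LinearIndependent.of_comp _ hcomp
    have := hv.fintype_card_le_finrank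
    simpa using this

end
end

section
/- Let g be a 6-dimensional real Lie algebra with structure equations h3 = (0,0,0,0,0,12+34) and let J be any complex structure on g. Then there exists a basis ω¹, ω², ω³ of the (1,0)-forms of (g,J) such that dω¹ = dω² = 0 and either dω³ = ω¹∧conj(ω¹) + ω²∧conj(ω²) or dω³ = ω¹∧conj(ω¹) − ω²∧conj(ω²); that is, every complex structure on h3 is equivalent to J₀⁺ or to J₀⁻. -/
noncomputable section

open Complex

set_option maxHeartbeats 1600000

private lemma matrix_contra' (p0 p1 p2 q0 q1 q2 a0 a1 a2 b0 b1 b2 : ℝ)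
    (E00 : a0*p0 + b0*q0 = 1) (E10 : a0*p1 + b0*q1 = 0) (E20 : a0*p2 + b0*q2 = 0)
    (E01 : a1*p0 + b1*q0 = 0) (E11 : a1*p1 + b1*q1 = 1) (E21 : a1*p2 + b1*q2 = 0)
    (E02 : a2*p0 + b2*q0 = 0) (E12 : a2*p1 + b2*q1 = 0) (E22 : a2*p2 + b2*q2 = 1) :
    False := by
  have key : (a0*b1 - a1*b0) * (p0*q1 - p1*q0) = 1 := by
    have h1 : (a0*p0+b0*q0) * (a1*p1+b1*q1) = 1 := by rw [E00, E11]; norm_num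
    have h2 : (a0*p1+b0*q1) * (a1*p0+b1*q0) = 0 := by rw [E10]; ring
    linear_combination h1 - h2
  have idt : (a1*b2 - a2*b1) * (a0*p2 + b0*q2) - (a0*b2 - a2*b0) * (a1*p2 + b1*q2)
      + (a0*b1 - a1*b0) * (a2*p2 + b2*q2) = 0 := by ring
  rw [E20, E21, E22] at idt
  have hD : a0*b1 - a1*b0 = 0 := by linear_combination idt
  rw [hD] at key; norm_num at key

private def cmk {g : Type*} [AddCommGroup g] [Module ℝ g] (a b : g →ₗ[ℝ] ℝ) :
    g →ₗ[ℝ] ℂ := a.smulRight (1:ℂ) + b.smulRight Complex.I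

private lemma cmk_apply {g : Type*} [AddCommGroup g] [Module ℝ g] (a b : g →ₗ[ℝ] ℝ)
    (x : g) : cmk a b x = (a x : ℂ) + (b x : ℂ) * Complex.I := by
  simp [cmk, Complex.real_smul]

/-- every complex structure on `h3` is equivalent to `J₀⁺` or
`J₀⁻`. -/
theorem complex_structures_on_h3
    (g : Type*) [LieRing g] [LieAlgebra ℝ g]
    (hdim : Module.finrank ℝ g = 6) (hg : IsH3 g)
    (J : g →ₗ[ℝ] g) (hJ : IsComplexStructure J) :
    ∃ ω : Fin 3 → (g →ₗ[ℝ] ℂ),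
      IsOneZeroBasis J ω ∧
      (∀ x y : g, ω 0 ⁅x, y⁆ = 0) ∧ (∀ x y : g, ω 1 ⁅x, y⁆ = 0) ∧
      ((∀ x y : g, -(ω 2 ⁅x, y⁆) =
          wC (ω 0) (cg (ω 0)) x y + wC (ω 1) (cg (ω 1)) x y) ∨
       (∀ x y : g, -(ω 2 ⁅x, y⁆) =
          wC (ω 0) (cg (ω 0)) x y - wC (ω 1) (cg (ω 1)) x y)) := by
  obtain ⟨α, hα1, hα5⟩ := hg
  obtain ⟨hJ2, hJint⟩ := hJ
  have hfd : FiniteDimensional ℝ g := FiniteDimensional.of_finrank_pos (by rw [hdim]; norm_num)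
  obtain ⟨e, he⟩ : ∃ e : Fin 6 → g, ∀ i j, α i (e j) = if i = j then 1 else 0 := by
    refine ⟨fun j => (Module.evalEquiv ℝ g).symm (α.dualBasis j), fun i j => ?_⟩
    have h2 : (Module.evalEquiv ℝ g) ((Module.evalEquiv ℝ g).symm (α.dualBasis j))
        = α.dualBasis j := LinearEquiv.apply_symm_apply _ _
    have h3 : Module.Dual.eval ℝ g ((Module.evalEquiv ℝ g).symm (α.dualBasis j)) (α i)
        = α i ((Module.evalEquiv ℝ g).symm (α.dualBasis j)) := Module.Dual.eval_apply ..
    rw [← h3, ← Module.evalEquiv_toLinearMap]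
    show (Module.evalEquiv ℝ g) _ (α i) = _
    rw [h2, Module.Basis.coe_dualBasis, Module.Basis.coord_apply, Module.Basis.repr_self, Finsupp.single_apply]
  have hsep : ∀ z : g, (∀ i, α i z = 0) → z = 0 := by
    intro z hz
    rw [← Module.forall_dual_apply_eq_zero_iff ℝ]
    intro fl
    rw [← α.sum_repr fl]
    simp only [LinearMap.sum_apply, LinearMap.smul_apply, hz, smul_zero, Finset.sum_const_zero]
  -- the bracket form, bundled
  let φL : g →ₗ[ℝ] g →ₗ[ℝ] ℝ :=
    LinearMap.mk₂ ℝ (fun x y => α 5 ⁅x, y⁆)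
      (fun x x' y => by simp [add_lie])
      (fun c x y => by simp [smul_lie])
      (fun x y y' => by simp [lie_add])
      (fun c x y => by simp [lie_smul])
  have φL_apply : ∀ x y : g, φL x y = α 5 ⁅x, y⁆ := fun x y => rfl
  have he5 : ∀ i : Fin 6, i.val < 5 → α i (e 5) = 0 := fun i hi => by
    rw [he]; exact if_neg (Fin.ne_of_val_ne (by omega))
  -- bracket formula
  have hbr : ∀ x y : g, ⁅x, y⁆ = φL x y • e 5 := by
    intro x y
    have hz : ∀ i, α i (⁅x, y⁆ - φL x y • e 5) = 0 := by
      intro i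
      by_cases hi : i.val < 5
      · rw [map_sub, map_smul, hα1 i hi x y, he5 i hi, smul_zero, sub_zero]
      · have hi5 : i = 5 := Fin.ext (by omega)
        subst hi5
        rw [map_sub, map_smul, φL_apply, he]
        simp
    exact sub_eq_zero.mp (hsep _ hz)
  -- e 5 is not a J-eigenvector direction
  have he5ne : e 5 ≠ 0 := by
    intro h
    have := he 5 5
    rw [h, map_zero] at this
    simp at this
  have hnotreal : ∀ r : ℝ, J (e 5) ≠ r • e 5 := by
    intro r hr
    have h1 : J (J (e 5)) = r • (r • e 5) := by rw [hr, map_smul, hr]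
    rw [hJ2, smul_smul] at h1
    have h2 : (r * r + 1) • e 5 = 0 := by
      rw [add_smul, one_smul, ← h1]
      abel
    rcases smul_eq_zero.mp h2 with h | h
    · nlinarith
    · exact he5ne h
  -- integrability consequence
  have hskew : ∀ x y : g, φL (J x) y = - φL x (J y) := by
    intro x y
    by_contra hne
    have hs : φL (J x) y + φL x (J y) ≠ 0 := fun h => hne (by linarith)
    have hint := hJint x y
    rw [hbr (J x) (J y), hbr (J x) y, hbr x (J y), hbr x y, map_smul, map_smul] at hint
    have h2 : (φL (J x) y + φL x (J y)) • J (e 5)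
        = (φL (J x) (J y) - φL x y) • e 5 := by
      rw [add_smul, sub_smul, hint]; abel
    have h3 : J (e 5) = ((φL (J x) y + φL x (J y))⁻¹ * (φL (J x) (J y) - φL x y)) • e 5 := by
      rw [mul_smul, ← h2, inv_smul_smul₀ hs]
    exact hnotreal _ h3
  -- algebraic identities
  have hswap : ∀ x y : g, φL x y = - φL y x := by
    intro x y
    rw [φL_apply, φL_apply, ← lie_skew, map_neg]
  have hdiag : ∀ x : g, φL x x = 0 := fun x => by rw [φL_apply, lie_self, map_zero]
  have hJJ : ∀ x y : g, φL (J x) (J y) = φL x y := by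
    intro x y
    rw [hskew, hJ2, map_neg, neg_neg]
  have hsym : ∀ x y : g, φL x (J y) = φL y (J x) := by
    intro x y
    rw [hswap, hskew, neg_neg]
  -- evaluations of the structure form
  have hφf : ∀ x y : g, φL x y = -(wR (α 0) (α 1) x y + wR (α 2) (α 3) x y) := by
    intro x y
    rw [φL_apply]
    linarith [hα5 x y]
  have h01 : φL (e 0) (e 1) = -1 := by
    rw [hφf]
    simp [wR, he]
  have he5L : ∀ z : g, φL (e 5) z = 0 := by
    intro z
    rw [hφf]
    simp [wR, he]
  have hker : ∀ z : g, (∀ w, φL z w = 0) →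
      α 0 z = 0 ∧ α 1 z = 0 ∧ α 2 z = 0 ∧ α 3 z = 0 := by
    intro z hz
    refine ⟨?_, ?_, ?_, ?_⟩
    · have h := hz (e 1); rw [hφf] at h; simp [wR, he] at h; linarith
    · have h := hz (e 0); rw [hφf] at h; simp [wR, he] at h; linarith
    · have h := hz (e 3); rw [hφf] at h; simp [wR, he] at h; linarith
    · have h := hz (e 2); rw [hφf] at h; simp [wR, he] at h; linarith
  -- existence of x1
  obtain ⟨x1, hc1⟩ : ∃ x : g, φL x (J x) ≠ 0 := by
    by_contra hc; push_neg at hc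
    have hall : ∀ a b : g, φL a (J b) = 0 := by
      intro a b
      have h1 := hc (a + b)
      rw [map_add, map_add, map_add, LinearMap.add_apply, LinearMap.add_apply] at h1
      have h3 := hc a; have h4 := hc b
      have h5 := hsym a b
      linarith
    have hz : φL (e 0) (e 1) = 0 := by
      have h1 := hall (e 0) (J (e 1))
      rw [hJ2, map_neg, neg_eq_zero] at h1
      exact h1
    rw [h01] at hz; norm_num at hz
  -- projection onto the orthogonal complement of x1, J x1
  have hP : ∀ z : g, ∃ w : g, (∃ a b : ℝ, z = w + (a • x1 + b • (J x1))) ∧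
      φL x1 (J w) = 0 ∧ φL (J x1) (J w) = 0 := by
    intro z
    refine ⟨z - ((φL x1 (J z) / φL x1 (J x1)) • x1
      + (φL (J x1) (J z) / φL x1 (J x1)) • (J x1)),
      ⟨_, _, (sub_add_cancel _ _).symm⟩, ?_, ?_⟩
    · rw [map_sub, map_add, map_smul, map_smul, map_sub, map_add, map_smul, map_smul]
      have hx1Jx1 : φL x1 (J (J x1)) = 0 := by
        rw [hJ2, map_neg, hdiag, neg_zero]
      rw [hx1Jx1]
      rw [smul_eq_mul, smul_eq_mul, mul_zero, add_zero, div_mul_cancel₀ _ hc1, sub_self]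
    · rw [map_sub, map_add, map_smul, map_smul, map_sub, map_add, map_smul, map_smul]
      have h1 : φL (J x1) (J x1) = 0 := hdiag _
      have h2 : φL (J x1) (J (J x1)) = φL x1 (J x1) := by rw [hJJ]
      rw [h1, h2]
      rw [smul_eq_mul, smul_eq_mul, mul_zero, zero_add, div_mul_cancel₀ _ hc1, sub_self]
  -- existence of x2
  obtain ⟨x2, hx2a, hx2b, hc2⟩ :
      ∃ x2 : g, φL x1 (J x2) = 0 ∧ φL (J x1) (J x2) = 0 ∧ φL x2 (J x2) ≠ 0 := by
    by_contra hcon; push_neg at hcon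
    have hU2 : ∀ u w : g, φL x1 (J u) = 0 → φL (J x1) (J u) = 0 →
        φL x1 (J w) = 0 → φL (J x1) (J w) = 0 → φL u (J w) = 0 := by
      intro u w hu1 hu2 hw1 hw2
      have h1 := hcon (u + w) (by rw [map_add, map_add, hu1, hw1, add_zero])
        (by rw [map_add, map_add, hu2, hw2, add_zero])
      rw [map_add, map_add, map_add, LinearMap.add_apply, LinearMap.add_apply] at h1
      have h3 := hcon u hu1 hu2; have h4 := hcon w hw1 hw2
      have h5 := hsym u w
      linarith
    have hU1 : ∀ u : g, φL x1 (J u) = 0 → φL (J x1) (J u) = 0 → ∀ z, φL u (J z) = 0 := by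
      intro u hu1 hu2 z
      obtain ⟨w, ⟨a, b, hzw⟩, hw1, hw2⟩ := hP z
      have hx1u : φL u (J x1) = 0 := by rw [hsym]; exact hu1
      have hx1u' : φL u (J (J x1)) = 0 := by
        rw [hJ2, map_neg, neg_eq_zero, hswap, ← hJJ x1 u, hu2, neg_zero]
      rw [hzw]
      simp only [map_add, map_smul, smul_eq_mul]
      rw [hU2 u w hu1 hu2 hw1 hw2, hx1u, hx1u']
      ring
    have hUk : ∀ u : g, φL x1 (J u) = 0 → φL (J x1) (J u) = 0 →
        α 0 u = 0 ∧ α 1 u = 0 ∧ α 2 u = 0 ∧ α 3 u = 0 := by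
      intro u hu1 hu2
      apply hker u
      intro w
      have h := hU1 u hu1 hu2 (J w)
      rw [hJ2, map_neg, neg_eq_zero] at h
      exact h
    obtain ⟨w0, ⟨a0, b0, hz0⟩, hw01, hw02⟩ := hP (e 0)
    obtain ⟨w1, ⟨a1, b1, hz1⟩, hw11, hw12⟩ := hP (e 1)
    obtain ⟨w2, ⟨a2, b2, hz2⟩, hw21, hw22⟩ := hP (e 2)
    have hEq : ∀ (ℓ : Module.Dual ℝ g) (j : Fin 6) (w : g) (a b : ℝ),
        e j = w + (a • x1 + b • (J x1)) → ℓ w = 0 →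
        a * ℓ x1 + b * ℓ (J x1) = ℓ (e j) := by
      intro ℓ j w a b hzw hw0
      rw [hzw]
      simp only [map_add, map_smul, smul_eq_mul, hw0]
      ring
    have E00 := (hEq (α 0) 0 w0 a0 b0 hz0 (hUk w0 hw01 hw02).1).trans (he 0 0)
    have E10 := (hEq (α 1) 0 w0 a0 b0 hz0 (hUk w0 hw01 hw02).2.1).trans (he 1 0)
    have E20 := (hEq (α 2) 0 w0 a0 b0 hz0 (hUk w0 hw01 hw02).2.2.1).trans (he 2 0)
    have E01 := (hEq (α 0) 1 w1 a1 b1 hz1 (hUk w1 hw11 hw12).1).trans (he 0 1)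
    have E11 := (hEq (α 1) 1 w1 a1 b1 hz1 (hUk w1 hw11 hw12).2.1).trans (he 1 1)
    have E21 := (hEq (α 2) 1 w1 a1 b1 hz1 (hUk w1 hw11 hw12).2.2.1).trans (he 2 1)
    have E02 := (hEq (α 0) 2 w2 a2 b2 hz2 (hUk w2 hw21 hw22).1).trans (he 0 2)
    have E12 := (hEq (α 1) 2 w2 a2 b2 hz2 (hUk w2 hw21 hw22).2.1).trans (he 1 2)
    have E22 := (hEq (α 2) 2 w2 a2 b2 hz2 (hUk w2 hw21 hw22).2.2.1).trans (he 2 2)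
    norm_num at E00 E10 E20 E01 E11 E21 E02 E12 E22
    exact matrix_contra' (α 0 x1) (α 1 x1) (α 2 x1) (α 0 (J x1)) (α 1 (J x1)) (α 2 (J x1))
      a0 a1 a2 b0 b1 b2 E00 E10 E20 E01 E11 E21 E02 E12 E22
  -- opaque names
  obtain ⟨c1, t01⟩ : ∃ r : ℝ, φL x1 (J x1) = r := ⟨_, rfl⟩
  rw [t01] at hc1
  obtain ⟨c2, hc2e⟩ : ∃ r : ℝ, φL x2 (J x2) = r := ⟨_, rfl⟩
  rw [hc2e] at hc2
  have habs : 0 < |c1| / |c2| := div_pos (abs_pos.mpr hc1) (abs_pos.mpr hc2)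
  obtain ⟨s, hs2, hs0⟩ : ∃ r : ℝ, r^2 = |c1| / |c2| ∧ r ≠ 0 :=
    ⟨Real.sqrt (|c1| / |c2|), Real.sq_sqrt habs.le, (Real.sqrt_pos.mpr habs).ne'⟩
  obtain ⟨y2, hy2e⟩ : ∃ w : g, s • x2 = w := ⟨_, rfl⟩
  have hA' : φL x1 (J y2) = 0 := by
    rw [← hy2e, map_smul, map_smul, hx2a, smul_zero]
  have hB' : φL (J x1) (J y2) = 0 := by
    rw [← hy2e, map_smul, map_smul, hx2b, smul_zero]
  obtain ⟨C2, ty2Jy2⟩ : ∃ r : ℝ, φL y2 (J y2) = r := ⟨_, rfl⟩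
  have hC2eq : C2 = s^2 * c2 := by
    rw [← ty2Jy2, ← hy2e, φL_apply, map_smul, smul_lie, lie_smul, map_smul, map_smul,
      smul_eq_mul, smul_eq_mul, ← φL_apply, hc2e]
    ring
  have hC2ne : C2 ≠ 0 := by
    rw [hC2eq, hs2]
    exact mul_ne_zero habs.ne' hc2
  have heps : C2 = c1 ∨ C2 = -c1 := by
    rw [hC2eq, hs2]
    rcases lt_or_gt_of_ne hc2 with h2 | h2 <;> rcases lt_or_gt_of_ne hc1 with h1 | h1
    · left; rw [abs_of_neg h2, abs_of_neg h1]; field_simp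
    · right; rw [abs_of_neg h2, abs_of_pos h1, div_neg, neg_mul, div_mul_cancel₀ _ hc2]
    · right; rw [abs_of_pos h2, abs_of_neg h1]; field_simp
    · left; rw [abs_of_pos h2, abs_of_pos h1]; field_simp
  -- pairing table lemmas
  have t10 : φL (J x1) x1 = -c1 := by rw [hswap, t01]
  have tx1y2 : φL x1 y2 = 0 := by rw [← hJJ, hB']
  have tJx1y2 : φL (J x1) y2 = 0 := by rw [hswap, hsym, hA', neg_zero]
  have ty2x1 : φL y2 x1 = 0 := by rw [hswap, tx1y2, neg_zero]
  have ty2Jx1 : φL y2 (J x1) = 0 := by rw [hsym, hA']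
  have tJy2x1 : φL (J y2) x1 = 0 := by rw [hswap, hA', neg_zero]
  have tJy2Jx1 : φL (J y2) (J x1) = 0 := by rw [hJJ, ty2x1]
  have tJx1Jy2 : φL (J x1) (J y2) = 0 := hB'
  have tJy2y2 : φL (J y2) y2 = -C2 := by rw [hswap, ty2Jy2]
  have he5R : ∀ z : g, φL z (e 5) = 0 := fun z => by rw [hswap, he5L, neg_zero]
  have hJe5R : ∀ z : g, φL z (J (e 5)) = 0 := fun z => by rw [hsym]; exact he5L _
  have hJe5L : ∀ z : g, φL (J (e 5)) z = 0 := fun z => by rw [hswap, hJe5R, neg_zero]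
  -- the adapted basis
  set v : Fin 6 → g := ![x1, J x1, y2, J y2, e 5, J (e 5)] with hvdef
  have hv0 : v 0 = x1 := rfl
  have hv1 : v 1 = J x1 := rfl
  have hv2 : v 2 = y2 := rfl
  have hv3 : v 3 = J y2 := rfl
  have hv4 : v 4 = e 5 := rfl
  have hv5 : v 5 = J (e 5) := rfl
  have hli : LinearIndependent ℝ v := by
    rw [Fintype.linearIndependent_iff]
    intro a ha
    have hpair : ∀ w : g, a 0 * φL (v 0) w + a 1 * φL (v 1) w + a 2 * φL (v 2) w
        + a 3 * φL (v 3) w + a 4 * φL (v 4) w + a 5 * φL (v 5) w = 0 := by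
      intro w
      have h1 : φL (∑ i, a i • v i) w = 0 := by rw [ha]; simp
      rw [map_sum, LinearMap.sum_apply, Fin.sum_univ_six] at h1
      simpa [smul_eq_mul] using h1
    have h0 : a 0 = 0 := by
      have h := hpair (J x1)
      rw [hv0, hv1, hv2, hv3, hv4, hv5, t01, hdiag, ty2Jx1, tJy2Jx1, he5L, hJe5L] at h
      rcases mul_eq_zero.mp (by linear_combination h : a 0 * c1 = 0) with h' | h'
      · exact h'
      · exact absurd h' hc1
    have h1 : a 1 = 0 := by
      have h := hpair x1
      rw [hv0, hv1, hv2, hv3, hv4, hv5, hdiag, t10, ty2x1, tJy2x1, he5L, hJe5L] at h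
      rcases mul_eq_zero.mp (by linear_combination -h : a 1 * c1 = 0) with h' | h'
      · exact h'
      · exact absurd h' hc1
    have h2 : a 2 = 0 := by
      have h := hpair (J y2)
      rw [hv0, hv1, hv2, hv3, hv4, hv5, hA', tJx1Jy2, ty2Jy2, hdiag, he5L, hJe5L] at h
      rcases mul_eq_zero.mp (by linear_combination h : a 2 * C2 = 0) with h' | h'
      · exact h'
      · exact absurd h' hC2ne
    have h3 : a 3 = 0 := by
      have h := hpair y2
      rw [hv0, hv1, hv2, hv3, hv4, hv5, tx1y2, tJx1y2, hdiag, tJy2y2, he5L, hJe5L] at h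
      rcases mul_eq_zero.mp (by linear_combination -h : a 3 * C2 = 0) with h' | h'
      · exact h'
      · exact absurd h' hC2ne
    have hrest : a 4 • e 5 + a 5 • J (e 5) = 0 := by
      rw [Fin.sum_univ_six, hv0, hv1, hv2, hv3, hv4, hv5, h0, h1, h2, h3] at ha
      simpa using ha
    have h5 : a 5 = 0 := by
      by_contra h5ne
      have heq6 : a 5 • J (e 5) = (-(a 4)) • e 5 := by
        have h' : a 4 • e 5 = -(a 5 • J (e 5)) := add_eq_zero_iff_eq_neg.mp hrest
        rw [neg_smul, h', neg_neg]
      have h6 : J (e 5) = ((a 5)⁻¹ * -(a 4)) • e 5 := by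
        rw [mul_smul, ← heq6, inv_smul_smul₀ h5ne]
      exact hnotreal _ h6
    have h4 : a 4 = 0 := by
      rw [h5, zero_smul, add_zero] at hrest
      have := congrArg (α 5) hrest
      rw [map_smul, he, map_zero] at this
      simpa using this
    intro i
    fin_cases i <;> assumption
  -- basis and coordinates
  have hcard : Fintype.card (Fin 6) = Module.finrank ℝ g := by rw [hdim]; simp
  let f : Module.Basis (Fin 6) ℝ g := basisOfLinearIndependentOfCardEqFinrank hli hcard
  have hfv : ∀ i, f i = v i := fun i =>
    congrFun (coe_basisOfLinearIndependentOfCardEqFinrank hli hcard) i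
  have hδ : ∀ i j, f.coord i (v j) = if j = i then 1 else 0 := by
    intro i j
    rw [← hfv, Module.Basis.coord_apply, Module.Basis.repr_self, Finsupp.single_apply]
  have hδ' : ∀ i j, f.repr (v j) i = if j = i then 1 else 0 := by
    intro i j
    rw [← Module.Basis.coord_apply, hδ]
  have hm0 : ∀ h : (0:ℕ) < 6, v ⟨0, h⟩ = x1 := fun _ => rfl
  have hm1 : ∀ h : (1:ℕ) < 6, v ⟨1, h⟩ = J x1 := fun _ => rfl
  have hm2 : ∀ h : (2:ℕ) < 6, v ⟨2, h⟩ = y2 := fun _ => rfl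
  have hm3 : ∀ h : (3:ℕ) < 6, v ⟨3, h⟩ = J y2 := fun _ => rfl
  have hm4 : ∀ h : (4:ℕ) < 6, v ⟨4, h⟩ = e 5 := fun _ => rfl
  have hm5 : ∀ h : (5:ℕ) < 6, v ⟨5, h⟩ = J (e 5) := fun _ => rfl
  have hF0 : ((0 : Fin 6) : ℕ) = 0 := rfl
  have hF1 : ((1 : Fin 6) : ℕ) = 1 := rfl
  have hF2 : ((2 : Fin 6) : ℕ) = 2 := rfl
  have hF3 : ((3 : Fin 6) : ℕ) = 3 := rfl
  have hF4 : ((4 : Fin 6) : ℕ) = 4 := rfl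
  have hF5 : ((5 : Fin 6) : ℕ) = 5 := rfl
  have hJv0 : J (v 0) = v 1 := rfl
  have hJv1 : J (v 1) = -(v 0) := hJ2 x1
  have hJv2 : J (v 2) = v 3 := rfl
  have hJv3 : J (v 3) = -(v 2) := hJ2 y2
  have hJv4 : J (v 4) = v 5 := rfl
  have hJv5 : J (v 5) = -(v 4) := hJ2 (e 5)
  have hd0 : (f.coord 0).comp J = -(f.coord 1) := by
    apply f.ext; intro j
    fin_cases j <;>
      simp [LinearMap.comp_apply, LinearMap.neg_apply, hfv, hJv0, hJv1, hJv2, hJv3,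
        hJv4, hJv5, hδ, hδ']
  have hd1 : (f.coord 1).comp J = f.coord 0 := by
    apply f.ext; intro j
    fin_cases j <;>
      simp [LinearMap.comp_apply, LinearMap.neg_apply, hfv, hJv0, hJv1, hJv2, hJv3,
        hJv4, hJv5, hδ, hδ']
  have hd2 : (f.coord 2).comp J = -(f.coord 3) := by
    apply f.ext; intro j
    fin_cases j <;>
      simp [LinearMap.comp_apply, LinearMap.neg_apply, hfv, hJv0, hJv1, hJv2, hJv3,
        hJv4, hJv5, hδ, hδ']
  have hd3 : (f.coord 3).comp J = f.coord 2 := by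
    apply f.ext; intro j
    fin_cases j <;>
      simp [LinearMap.comp_apply, LinearMap.neg_apply, hfv, hJv0, hJv1, hJv2, hJv3,
        hJv4, hJv5, hδ, hδ']
  have hd4 : (f.coord 4).comp J = -(f.coord 5) := by
    apply f.ext; intro j
    fin_cases j <;>
      simp [LinearMap.comp_apply, LinearMap.neg_apply, hfv, hJv0, hJv1, hJv2, hJv3,
        hJv4, hJv5, hδ, hδ']
  have hd5 : (f.coord 5).comp J = f.coord 4 := by
    apply f.ext; intro j
    fin_cases j <;>
      simp [LinearMap.comp_apply, LinearMap.neg_apply, hfv, hJv0, hJv1, hJv2, hJv3,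
        hJv4, hJv5, hδ, hδ']
  have hd0x : ∀ x, f.coord 0 (J x) = -(f.coord 1 x) := fun x => by
    simpa using LinearMap.congr_fun hd0 x
  have hd1x : ∀ x, f.coord 1 (J x) = f.coord 0 x := fun x => by
    simpa using LinearMap.congr_fun hd1 x
  have hd2x : ∀ x, f.coord 2 (J x) = -(f.coord 3 x) := fun x => by
    simpa using LinearMap.congr_fun hd2 x
  have hd3x : ∀ x, f.coord 3 (J x) = f.coord 2 x := fun x => by
    simpa using LinearMap.congr_fun hd3 x
  have hd4x : ∀ x, f.coord 4 (J x) = -(f.coord 5 x) := fun x => by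
    simpa using LinearMap.congr_fun hd4 x
  have hd5x : ∀ x, f.coord 5 (J x) = f.coord 4 x := fun x => by
    simpa using LinearMap.congr_fun hd5 x
  -- the structure identity
  have hΨ : ∀ x y : g, φL x y =
      c1 * (f.coord 0 x * f.coord 1 y - f.coord 1 x * f.coord 0 y)
      + C2 * (f.coord 2 x * f.coord 3 y - f.coord 3 x * f.coord 2 y) := by
    let Ψ : g →ₗ[ℝ] g →ₗ[ℝ] ℝ :=
      LinearMap.mk₂ ℝ (fun x y =>
        c1 * (f.coord 0 x * f.coord 1 y - f.coord 1 x * f.coord 0 y)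
        + C2 * (f.coord 2 x * f.coord 3 y - f.coord 3 x * f.coord 2 y))
        (fun a b y => by simp only [map_add]; ring)
        (fun c a y => by simp only [map_smul, smul_eq_mul]; ring)
        (fun a b y => by simp only [map_add]; ring)
        (fun c a y => by simp only [map_smul, smul_eq_mul]; ring)
    have hfe : φL = Ψ := by
      apply f.ext; intro i
      apply f.ext; intro j
      rw [hfv, hfv]
      have hΨa : ∀ x y : g, Ψ x y =
          c1 * (f.coord 0 x * f.coord 1 y - f.coord 1 x * f.coord 0 y)
          + C2 * (f.coord 2 x * f.coord 3 y - f.coord 3 x * f.coord 2 y) :=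
        fun x y => rfl
      fin_cases i <;> fin_cases j <;>
        rw [hΨa] <;>
        simp only [hδ] <;>
        norm_num [Fin.ext_iff, hF0, hF1, hF2, hF3, hF4, hF5, hv0, hv1, hv2, hv3, hv4,
          hv5, hm0, hm1, hm2, hm3, hm4, hm5, hdiag, t01, t10, tx1y2, tJx1y2, ty2x1,
          ty2Jx1, tJy2x1, tJy2Jx1, tJx1Jy2, ty2Jy2, tJy2y2, hA', hB', he5L, he5R,
          hJe5L, hJe5R]
    intro x y
    rw [hfe]
    rfl
  -- the (1,0)-forms
  have hc1C : (c1 : ℂ) ≠ 0 := Complex.ofReal_ne_zero.mpr hc1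
  have h2I : (2 * Complex.I) / (c1:ℂ) ≠ 0 :=
    div_ne_zero (mul_ne_zero two_ne_zero Complex.I_ne_zero) hc1C
  have hOZ0 : ∀ x, cmk (f.coord 0) (f.coord 1) (J x)
      = Complex.I * cmk (f.coord 0) (f.coord 1) x := by
    intro x
    rw [cmk_apply, cmk_apply, hd0x, hd1x]
    push_cast
    linear_combination (-((f.coord 1 x : ℝ) : ℂ)) * Complex.I_sq
  have hOZ1 : ∀ x, cmk (f.coord 2) (f.coord 3) (J x)
      = Complex.I * cmk (f.coord 2) (f.coord 3) x := by
    intro x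
    rw [cmk_apply, cmk_apply, hd2x, hd3x]
    push_cast
    linear_combination (-((f.coord 3 x : ℝ) : ℂ)) * Complex.I_sq
  have hOZ2 : ∀ x, (((2 * Complex.I) / (c1:ℂ)) • cmk (f.coord 4) (f.coord 5)) (J x)
      = Complex.I * (((2 * Complex.I) / (c1:ℂ)) • cmk (f.coord 4) (f.coord 5)) x := by
    intro x
    rw [LinearMap.smul_apply, LinearMap.smul_apply, smul_eq_mul, smul_eq_mul,
      cmk_apply, cmk_apply, hd4x, hd5x]
    push_cast
    linear_combination (-((2 * Complex.I) / (c1:ℂ) * ((f.coord 5 x : ℝ) : ℂ))) * Complex.I_sq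
  -- values on the basis
  have hval00 : cmk (f.coord 0) (f.coord 1) (v 0) = 1 := by
    rw [cmk_apply, hδ, hδ]; norm_num [Fin.ext_iff, hF0, hF1, hF2, hF3, hF4, hF5]
  have hval02 : cmk (f.coord 0) (f.coord 1) (v 2) = 0 := by
    rw [cmk_apply, hδ, hδ]; norm_num [Fin.ext_iff, hF0, hF1, hF2, hF3, hF4, hF5]
  have hval04 : cmk (f.coord 0) (f.coord 1) (v 4) = 0 := by
    rw [cmk_apply, hδ, hδ]; norm_num [Fin.ext_iff, hF0, hF1, hF2, hF3, hF4, hF5]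
  have hval10 : cmk (f.coord 2) (f.coord 3) (v 0) = 0 := by
    rw [cmk_apply, hδ, hδ]; norm_num [Fin.ext_iff, hF0, hF1, hF2, hF3, hF4, hF5]
  have hval12 : cmk (f.coord 2) (f.coord 3) (v 2) = 1 := by
    rw [cmk_apply, hδ, hδ]; norm_num [Fin.ext_iff, hF0, hF1, hF2, hF3, hF4, hF5]
  have hval14 : cmk (f.coord 2) (f.coord 3) (v 4) = 0 := by
    rw [cmk_apply, hδ, hδ]; norm_num [Fin.ext_iff, hF0, hF1, hF2, hF3, hF4, hF5]
  have hval20 : (((2 * Complex.I) / (c1:ℂ)) • cmk (f.coord 4) (f.coord 5)) (v 0) = 0 := by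
    rw [LinearMap.smul_apply, cmk_apply, hδ, hδ]; norm_num [Fin.ext_iff, hF0, hF1, hF2, hF3, hF4, hF5]
  have hval22 : (((2 * Complex.I) / (c1:ℂ)) • cmk (f.coord 4) (f.coord 5)) (v 2) = 0 := by
    rw [LinearMap.smul_apply, cmk_apply, hδ, hδ]; norm_num [Fin.ext_iff, hF0, hF1, hF2, hF3, hF4, hF5]
  have hval24 : (((2 * Complex.I) / (c1:ℂ)) • cmk (f.coord 4) (f.coord 5)) (v 4)
      = (2 * Complex.I) / (c1:ℂ) := by
    rw [LinearMap.smul_apply, cmk_apply, hδ, hδ]; norm_num [Fin.ext_iff, hF0, hF1, hF2, hF3, hF4, hF5]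
  -- a (1,0)-form is determined by its values on v 0, v 2, v 4
  have huniq : ∀ (η₁ η₂ : g →ₗ[ℝ] ℂ), IsOneZero J η₁ → IsOneZero J η₂ →
      η₁ (v 0) = η₂ (v 0) → η₁ (v 2) = η₂ (v 2) → η₁ (v 4) = η₂ (v 4) → η₁ = η₂ := by
    intro η₁ η₂ h1 h2 q0 q2 q4
    apply f.ext; intro j
    rw [hfv]
    fin_cases j
    · exact q0
    · show η₁ (J (v 0)) = η₂ (J (v 0))
      rw [h1 (v 0), h2 (v 0), q0]
    · exact q2
    · show η₁ (J (v 2)) = η₂ (J (v 2))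
      rw [h1 (v 2), h2 (v 2), q2]
    · exact q4
    · show η₁ (J (v 4)) = η₂ (J (v 4))
      rw [h1 (v 4), h2 (v 4), q4]
  -- closedness
  have hclosed0 : ∀ x y : g, cmk (f.coord 0) (f.coord 1) ⁅x, y⁆ = 0 := by
    intro x y
    rw [hbr x y, map_smul, show (e 5) = v 4 from rfl, hval04, smul_zero]
  have hclosed1 : ∀ x y : g, cmk (f.coord 2) (f.coord 3) ⁅x, y⁆ = 0 := by
    intro x y
    rw [hbr x y, map_smul, show (e 5) = v 4 from rfl, hval14, smul_zero]
  have hbrω : ∀ x y : g, (((2 * Complex.I) / (c1:ℂ)) • cmk (f.coord 4) (f.coord 5)) ⁅x, y⁆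
      = (2 * Complex.I / (c1:ℂ)) * ((φL x y : ℝ) : ℂ) := by
    intro x y
    rw [hbr x y, map_smul, show (e 5) = v 4 from rfl, hval24, Complex.real_smul]
    ring
  have hwCf : ∀ (p q : Fin 6) (x y : g),
      wC (cmk (f.coord p) (f.coord q)) (cg (cmk (f.coord p) (f.coord q))) x y
      = 2 * Complex.I *
        ((f.coord q x * f.coord p y - f.coord p x * f.coord q y : ℝ) : ℂ) := by
    intro p q x y
    simp only [wC, cg, cmk_apply, map_add, map_mul, Complex.conj_ofReal, Complex.conj_I]
    push_cast
    ring
  refine ⟨![cmk (f.coord 0) (f.coord 1), cmk (f.coord 2) (f.coord 3),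
    ((2 * Complex.I) / (c1:ℂ)) • cmk (f.coord 4) (f.coord 5)], ⟨?_, ?_, ?_⟩, ?_, ?_, ?_⟩
  · intro k
    fin_cases k
    · exact hOZ0
    · exact hOZ1
    · exact hOZ2
  · rw [Fintype.linearIndependent_iff]
    intro cc hcc
    have hval : ∀ w : g, cc 0 * (cmk (f.coord 0) (f.coord 1) w)
        + cc 1 * (cmk (f.coord 2) (f.coord 3) w)
        + cc 2 * ((((2 * Complex.I) / (c1:ℂ)) • cmk (f.coord 4) (f.coord 5)) w) = 0 := by
      intro w
      have h1 := LinearMap.congr_fun hcc w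
      rw [Fin.sum_univ_three] at h1
      simpa [smul_eq_mul] using h1
    have q0 := hval (v 0)
    rw [hval00, hval10, hval20] at q0
    have q2 := hval (v 2)
    rw [hval02, hval12, hval22] at q2
    have q4 := hval (v 4)
    rw [hval04, hval14, hval24] at q4
    have hc0 : cc 0 = 0 := by
      simpa using q0
    have hc1' : cc 1 = 0 := by
      simpa using q2
    have hc2' : cc 2 = 0 := by
      simp only [mul_zero, zero_add, add_zero] at q4
      rcases mul_eq_zero.mp q4 with h' | h'
      · exact h'
      · exact absurd h' h2I
    intro i
    fin_cases i
    · exact hc0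
    · exact hc1'
    · exact hc2'
  · intro η hη
    rw [Submodule.mem_span_range_iff_exists_fun]
    refine ⟨![η (v 0), η (v 2), ((c1:ℂ) / (2 * Complex.I)) * η (v 4)], ?_⟩
    rw [Fin.sum_univ_three]
    show η (v 0) • cmk (f.coord 0) (f.coord 1) + η (v 2) • cmk (f.coord 2) (f.coord 3)
      + (((c1:ℂ) / (2 * Complex.I)) * η (v 4))
        • (((2 * Complex.I) / (c1:ℂ)) • cmk (f.coord 4) (f.coord 5)) = η
    apply huniq _ _ ?_ hη ?_ ?_ ?_
    · intro x
      simp only [LinearMap.add_apply, LinearMap.smul_apply, smul_eq_mul,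
        hOZ0 x, hOZ1 x]
      have hz := hOZ2 x
      simp only [LinearMap.smul_apply, smul_eq_mul] at hz
      rw [hz]
      ring
    · simp only [LinearMap.add_apply, LinearMap.smul_apply, smul_eq_mul, hval00,
        hval10, hval20]
      ring
    · simp only [LinearMap.add_apply, LinearMap.smul_apply, smul_eq_mul, hval02,
        hval12, hval22]
      ring
    · simp only [LinearMap.add_apply, LinearMap.smul_apply, smul_eq_mul, hval04,
        hval14, hval24]
      field_simp
      ring
  · exact hclosed0
  · exact hclosed1
  · rcases heps with hE | hE
    · left
      intro x y
      show -((((2 * Complex.I) / (c1:ℂ)) • cmk (f.coord 4) (f.coord 5)) ⁅x, y⁆)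
        = wC (cmk (f.coord 0) (f.coord 1)) (cg (cmk (f.coord 0) (f.coord 1))) x y
          + wC (cmk (f.coord 2) (f.coord 3)) (cg (cmk (f.coord 2) (f.coord 3))) x y
      rw [hbrω, hwCf 0 1 x y, hwCf 2 3 x y, hΨ x y, hE]
      push_cast
      field_simp
      ring
    · right
      intro x y
      show -((((2 * Complex.I) / (c1:ℂ)) • cmk (f.coord 4) (f.coord 5)) ⁅x, y⁆)
        = wC (cmk (f.coord 0) (f.coord 1)) (cg (cmk (f.coord 0) (f.coord 1))) x y
          - wC (cmk (f.coord 2) (f.coord 3)) (cg (cmk (f.coord 2) (f.coord 3))) x y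
      rw [hbrω, hwCf 0 1 x y, hwCf 2 3 x y, hΨ x y, hE]
      push_cast
      field_simp
      ring


end
end
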